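/- arXiv:2406.07675 — 8 statements merged into one kernel-verified Lean document; each statement's English description precedes it below -/
import Mathlib

section
/- Let R be a 2-torsion free prime ring with involution * of the second kind (Z(R) ∩ S(R) ≠ {0}), and let F be a generalized derivation of R associated with a nonzero derivation d. Then F([x, x*]) + d(x ∘ x*) ∈ Z(R) for all x ∈ R if and only if R is an integral domain; likewise, F([x, x*]) − d(x ∘ x*) ∈ Z(R) for all x ∈ R if and only if R is an integral domain. -/
section AuxComm

variable {R : Type*} [Ring R]

private lemma half_cent (h2 : ∀ a : R, 2 * a = 0 → a = 0) {z : R}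
    (hz : ∀ r : R, (2 * z) * r = r * (2 * z)) : ∀ r : R, z * r = r * z := by
  intro r
  have h : 2 * (z * r - r * z) = (2 * z) * r - r * (2 * z) := by noncomm_ring
  have h' := h2 (z * r - r * z) (by rw [h, hz r, sub_self])
  exact sub_eq_zero.mp h'

private lemma kill_cent (hprime : ∀ a b : R, (∀ r : R, a * r * b = 0) → a = 0 ∨ b = 0)
    {z c : R} (hc : ∀ r : R, c * r = r * c) (hc0 : c ≠ 0) (hzc : z * c = 0) : z = 0 := by
  rcases hprime z c (fun r => by rw [mul_assoc, ← hc r, ← mul_assoc, hzc, zero_mul]) with h | h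
  · exact h
  · exact absurd h hc0

private lemma cent_of_mul (hprime : ∀ a b : R, (∀ r : R, a * r * b = 0) → a = 0 ∨ b = 0)
    {z c : R} (hc : ∀ r : R, c * r = r * c) (hc0 : c ≠ 0)
    (h : ∀ r : R, (z * c) * r = r * (z * c)) : ∀ r : R, z * r = r * z := by
  intro r
  have e : (z * r - r * z) * c = (z * c) * r - r * (z * c) := by
    simp only [sub_mul, mul_assoc, hc]
  have h0 := kill_cent hprime hc hc0 (z := z * r - r * z) (by rw [e, h r, sub_self])
  exact sub_eq_zero.mp h0

private lemma cent_mul_cent {a b : R} (ha : ∀ r : R, a * r = r * a)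
    (hb : ∀ r : R, b * r = r * b) : ∀ r : R, (a * b) * r = r * (a * b) := by
  intro r
  calc (a * b) * r = a * (b * r) := by rw [mul_assoc]
    _ = a * (r * b) := by rw [hb r]
    _ = (a * r) * b := by rw [mul_assoc]
    _ = (r * a) * b := by rw [ha r]
    _ = r * (a * b) := by rw [mul_assoc]

private lemma cent_add {a b : R} (ha : ∀ r : R, a * r = r * a)
    (hb : ∀ r : R, b * r = r * b) : ∀ r : R, (a + b) * r = r * (a + b) := fun r => by
  rw [add_mul, ha r, hb r, mul_add]

private lemma cent_neg {a : R} (ha : ∀ r : R, a * r = r * a) :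
    ∀ r : R, (-a) * r = r * (-a) := fun r => by rw [neg_mul, ha r, mul_neg]

private lemma cent_sub {a b : R} (ha : ∀ r : R, a * r = r * a)
    (hb : ∀ r : R, b * r = r * b) : ∀ r : R, (a - b) * r = r * (a - b) := fun r => by
  rw [sub_mul, ha r, hb r, mul_sub]

private lemma d_cent (d : R → R) (hd_mul : ∀ x y : R, d (x * y) = d x * y + x * d y)
    {z : R} (hz : ∀ r : R, z * r = r * z) : ∀ r : R, d z * r = r * d z := by
  intro r
  have h1 : d (z * r) = d z * r + z * d r := hd_mul z r
  have h2 : d (r * z) = d r * z + r * d z := hd_mul r z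
  have h3 : d z * r + z * d r = d r * z + r * d z := by rw [← h1, ← h2, hz r]
  rw [hz (d r)] at h3
  rw [add_comm (d z * r) (d r * z)] at h3
  exact add_left_cancel h3

theorem aux_comm {R : Type*} [Ring R] [StarRing R]
    (hprime : ∀ a b : R, (∀ r : R, a * r * b = 0) → a = 0 ∨ b = 0)
    (h2tor : ∀ a : R, 2 * a = 0 → a = 0)
    (s : R) (hsc : ∀ r : R, s * r = r * s) (hss : star s = -s) (hs0 : s ≠ 0)
    (F d : R → R)
    (hd_add : ∀ x y : R, d (x + y) = d x + d y)
    (hd_mul : ∀ x y : R, d (x * y) = d x * y + x * d y)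
    (hd_ne : ∃ x : R, d x ≠ 0)
    (hF_add : ∀ x y : R, F (x + y) = F x + F y)
    (hF_mul : ∀ x y : R, F (x * y) = F x * y + x * d y)
    (ε : R) (hεc : ∀ r : R, ε * r = r * ε) (hε2 : ε * ε = 1)
    (hmain : ∀ x r : R,
      (F (x * star x - star x * x) + ε * d (x * star x + star x * x)) * r
        = r * (F (x * star x - star x * x) + ε * d (x * star x + star x * x))) :
    ∀ a b : R, a * b = b * a := by
  -- basic facts
  have hsc' : ∀ a : R, a * s = s * a := fun a => (hsc a).symm
  have hmove : ∀ a b : R, a * (s * b) = s * (a * b) := fun a b => by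
    rw [← mul_assoc, ← hsc a, mul_assoc]
  have d0 : d 0 = 0 := by
    have := hd_add 0 0; simpa using this
  have dneg : ∀ v : R, d (-v) = - d v := by
    intro v
    have h : d (-v) + d v = 0 := by rw [← hd_add, neg_add_cancel, d0]
    exact eq_neg_of_add_eq_zero_left h
  have dsub : ∀ u v : R, d (u - v) = d u - d v := by
    intro u v; rw [sub_eq_add_neg, hd_add, dneg, sub_eq_add_neg]
  have d2 : ∀ u : R, d (2 * u) = 2 * d u := by
    intro u; rw [two_mul, hd_add, two_mul]
  have F0 : F 0 = 0 := by
    have := hF_add 0 0; simpa using this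
  have Fneg : ∀ v : R, F (-v) = - F v := by
    intro v
    have h : F (-v) + F v = 0 := by rw [← hF_add, neg_add_cancel, F0]
    exact eq_neg_of_add_eq_zero_left h
  have hds : ∀ r : R, d s * r = r * d s := d_cent d hd_mul hsc
  have hs2c : ∀ r : R, (s * s) * r = r * (s * s) := cent_mul_cent hsc hsc
  have hds2 : d (s * s) = 2 * (s * d s) := by
    rw [hd_mul, hsc (d s), two_mul]
  -- the key dichotomy
  by_cases hds0 : d s = 0
  · -- Case B : d s = 0
    have hds2z : d (s * s) = 0 := by rw [hds2, hds0, mul_zero, mul_zero]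
    -- step 1 : d (x* - x) is central
    have hdskew : ∀ x : R, ∀ r : R, d (star x - x) * r = r * d (star x - x) := by
      intro x
      have hPx := hmain x
      have hPxs := hmain (x + s)
      have eA : (x + s) * star (x + s) - star (x + s) * (x + s)
          = x * star x - star x * x := by
        rw [star_add, hss]
        simp only [sub_mul, mul_sub, add_mul, mul_add, neg_mul, mul_neg, mul_assoc, hsc', hmove] <;> first | noncomm_ring | abel
      have eB : (x + s) * star (x + s) + star (x + s) * (x + s)
          = (x * star x + star x * x) + (2 * (s * (star x - x)) - 2 * (s * s)) := by
        rw [star_add, hss]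
        simp only [sub_mul, mul_sub, add_mul, mul_add, neg_mul, mul_neg, mul_assoc, hsc', hmove] <;> first | noncomm_ring | abel
      have hexp : F ((x + s) * star (x + s) - star (x + s) * (x + s))
            + ε * d ((x + s) * star (x + s) + star (x + s) * (x + s))
          = (F (x * star x - star x * x) + ε * d (x * star x + star x * x))
            + ε * (2 * (s * d (star x - x))) := by
        rw [eA, eB, hd_add, dsub, d2, d2, hds2z, hd_mul, hds0, zero_mul, zero_add]
        noncomm_ring
      rw [hexp] at hPxs
      -- hPxs : central (P x + ε * (2 * (s * d (star x - x))))
      have hcent1 : ∀ r : R, (ε * (2 * (s * d (star x - x)))) * r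
          = r * (ε * (2 * (s * d (star x - x)))) := by
        intro r
        have h := cent_add (cent_neg hPx) hPxs r
        have e : -(F (x * star x - star x * x) + ε * d (x * star x + star x * x))
            + ((F (x * star x - star x * x) + ε * d (x * star x + star x * x))
              + ε * (2 * (s * d (star x - x))))
            = ε * (2 * (s * d (star x - x))) := by noncomm_ring
        rwa [e] at h
      have hcent2 : ∀ r : R, (2 * (s * d (star x - x))) * r
          = r * (2 * (s * d (star x - x))) := by
        have h := cent_mul_cent hεc hcent1
        have e : ε * (ε * (2 * (s * d (star x - x)))) = 2 * (s * d (star x - x)) := by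
          rw [← mul_assoc, hε2, one_mul]
        rwa [e] at h
      have hcent3 := half_cent h2tor hcent2
      have e : s * d (star x - x) = d (star x - x) * s := hsc _
      rw [e] at hcent3
      exact cent_of_mul hprime hsc hs0 hcent3
    -- step 2 : d (x* + x) is central
    have hdherm : ∀ x : R, ∀ r : R, d (star x + x) * r = r * d (star x + x) := by
      intro x
      have h := hdskew (x * s)
      have e : star (x * s) - x * s = -((star x + x) * s) := by
        rw [star_mul, hss]
        simp only [sub_mul, mul_sub, add_mul, mul_add, neg_mul, mul_neg, mul_assoc, hsc', hmove] <;> first | noncomm_ring | abel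
      rw [e, dneg] at h
      have h2 := cent_neg h
      rw [neg_neg] at h2
      rw [hd_mul, hds0, mul_zero, add_zero] at h2
      exact cent_of_mul hprime hsc hs0 h2
    -- step 3 : d maps into the center
    have hdZ : ∀ x : R, ∀ r : R, d x * r = r * d x := by
      intro x
      have h := cent_add (hdskew x) (hdherm x)
      have e : d (star x - x) + d (star x + x) = 2 * d (star x) := by
        rw [← hd_add]
        have e2 : (star x - x) + (star x + x) = 2 * star x := by noncomm_ring
        rw [e2, d2]
      rw [e] at h
      have h2 := half_cent h2tor h
      have := h2
      rw [show star x = star x from rfl] at this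
      -- transfer to x via star (star x) = x
      have h3 := half_cent h2tor (by
        have h4 := cent_add (hdskew (star x)) (hdherm (star x))
        have e4 : d (star (star x) - star x) + d (star (star x) + star x) = 2 * d x := by
          rw [← hd_add]
          have e5 : (star (star x) - star x) + (star (star x) + star x) = 2 * star (star x) := by
            noncomm_ring
          rw [e5, star_star, d2]
        rwa [e4] at h4)
      exact h3
    -- Posner-type argument
    have hdcomm : ∀ x y : R, d x * (y * x - x * y) = 0 := by
      intro x y
      have h1 := hdZ (x * y) x
      rw [hd_mul] at h1
      have hax : ∀ u : R, u * d x = d x * u := fun u => (hdZ x u).symm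
      have hbx : ∀ u : R, u * d y = d y * u := fun u => (hdZ y u).symm
      have hamove : ∀ u v : R, u * (d x * v) = d x * (u * v) := fun u v => by
        rw [← mul_assoc, hax u, mul_assoc]
      have hbmove : ∀ u v : R, u * (d y * v) = d y * (u * v) := fun u v => by
        rw [← mul_assoc, hbx u, mul_assoc]
      have e : d x * (y * x - x * y)
          = (d x * y + x * d y) * x - x * (d x * y + x * d y) := by
        simp only [sub_mul, mul_sub, add_mul, mul_add, mul_assoc, hax, hbx, hamove, hbmove] <;> noncomm_ring
      rw [e, h1, sub_self]
    have hxcent : ∀ x : R, d x ≠ 0 → ∀ y : R, x * y = y * x := by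
      intro x hdx y
      have hw : (y * x - x * y) * d x = 0 := by
        rw [← hdZ x (y * x - x * y), hdcomm]
      have h0 := kill_cent hprime (hdZ x) hdx hw
      have := sub_eq_zero.mp h0
      exact this.symm
    obtain ⟨a, ha⟩ := hd_ne
    intro u v
    by_cases hdu : d u = 0
    · have hda' : d (u + a) ≠ 0 := by rw [hd_add, hdu, zero_add]; exact ha
      have h1 := hxcent (u + a) hda' v
      have h2 := hxcent a ha v
      rw [add_mul, h2] at h1
      have h3 : u * v + v * a = v * u + v * a := by rw [h1, mul_add]
      exact add_right_cancel h3
    · exact hxcent u hdu v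
  · -- Case A : d s ≠ 0
    have hcc : ∀ r : R, d (s * s) * r = r * d (s * s) := d_cent d hd_mul hs2c
    have hc0 : d (s * s) ≠ 0 := by
      intro h
      have h1 : 2 * (s * d s) = 0 := by rw [← hds2]; exact h
      have h2 : s * d s = 0 := h2tor _ h1
      have h3 : d s * s = 0 := by rw [← hsc (d s), h2]
      exact hds0 (kill_cent hprime hsc hs0 h3)
    -- main substitution x -> x * s
    have hABc : ∀ x : R, ∀ r : R,
        (((x * star x - star x * x) + ε * (x * star x + star x * x)) * d (s * s)) * r
        = r * (((x * star x - star x * x) + ε * (x * star x + star x * x)) * d (s * s)) := by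
      intro x
      have hPx := hmain x
      have hPxs := hmain (x * s)
      have eA : (x * s) * star (x * s) - star (x * s) * (x * s)
          = -((x * star x - star x * x) * (s * s)) := by
        rw [star_mul, hss]
        simp only [sub_mul, mul_sub, add_mul, mul_add, neg_mul, mul_neg, mul_assoc, hsc', hmove] <;> first | noncomm_ring | abel
      have eB : (x * s) * star (x * s) + star (x * s) * (x * s)
          = -((x * star x + star x * x) * (s * s)) := by
        rw [star_mul, hss]
        simp only [sub_mul, mul_sub, add_mul, mul_add, neg_mul, mul_neg, mul_assoc, hsc', hmove] <;> first | noncomm_ring | abel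
      have hexp : F ((x * s) * star (x * s) - star (x * s) * (x * s))
            + ε * d ((x * s) * star (x * s) + star (x * s) * (x * s))
          = -((F (x * star x - star x * x) + ε * d (x * star x + star x * x)) * (s * s)
              + ((x * star x - star x * x) + ε * (x * star x + star x * x)) * d (s * s)) := by
        rw [eA, eB, Fneg, dneg, hF_mul (x * star x - star x * x) (s * s),
          hd_mul (x * star x + star x * x) (s * s)]
        noncomm_ring
      rw [hexp] at hPxs
      intro r
      have h := cent_neg (cent_add hPxs (cent_mul_cent hPx hs2c)) r
      have e : -( -((F (x * star x - star x * x) + ε * d (x * star x + star x * x)) * (s * s)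
              + ((x * star x - star x * x) + ε * (x * star x + star x * x)) * d (s * s))
            + (F (x * star x - star x * x) + ε * d (x * star x + star x * x)) * (s * s))
          = ((x * star x - star x * x) + ε * (x * star x + star x * x)) * d (s * s) := by
        noncomm_ring
      rwa [e] at h
    have hAB : ∀ x : R, ∀ r : R,
        ((x * star x - star x * x) + ε * (x * star x + star x * x)) * r
        = r * ((x * star x - star x * x) + ε * (x * star x + star x * x)) :=
      fun x => cent_of_mul hprime hcc hc0 (hABc x)
    -- substitute x -> star x and combine
    have hA : ∀ x : R, ∀ r : R, (x * star x - star x * x) * r = r * (x * star x - star x * x) := by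
      intro x
      have h1 := hAB x
      have h2 := hAB (star x)
      have e : ((x * star x - star x * x) + ε * (x * star x + star x * x))
          - ((star x * star (star x) - star (star x) * star x)
            + ε * (star x * star (star x) + star (star x) * star x))
          = 2 * (x * star x - star x * x) := by
        rw [star_star]; noncomm_ring
      have h3 := cent_sub h1 h2
      rw [e] at h3
      exact half_cent h2tor h3
    have hB : ∀ x : R, ∀ r : R, (x * star x + star x * x) * r = r * (x * star x + star x * x) := by
      intro x
      have h1 := hAB x
      have h2 := hAB (star x)
      have e : ((x * star x - star x * x) + ε * (x * star x + star x * x))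
          + ((star x * star (star x) - star (star x) * star x)
            + ε * (star x * star (star x) + star (star x) * star x))
          = 2 * (ε * (x * star x + star x * x)) := by
        rw [star_star]; noncomm_ring
      have h3 := cent_add h1 h2
      rw [e] at h3
      have h4 := half_cent h2tor h3
      have h5 := cent_mul_cent hεc h4
      have e2 : ε * (ε * (x * star x + star x * x)) = x * star x + star x * x := by
        rw [← mul_assoc, hε2, one_mul]
      rwa [e2] at h5
    have hxx : ∀ x : R, ∀ r : R, (x * star x) * r = r * (x * star x) := by
      intro x
      have h := cent_add (hA x) (hB x)
      have e : (x * star x - star x * x) + (x * star x + star x * x) = 2 * (x * star x) := by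
        noncomm_ring
      rw [e] at h
      exact half_cent h2tor h
    -- linearize : x* - x is central
    have hskew : ∀ x : R, ∀ r : R, (star x - x) * r = r * (star x - x) := by
      intro x
      have h1 := hxx (x + s)
      have h2 := hxx x
      have e : ((x + s) * star (x + s) - x * star x) + s * s = (star x - x) * s := by
        rw [star_add, hss]
        simp only [sub_mul, mul_sub, add_mul, mul_add, neg_mul, mul_neg, mul_assoc, hsc', hmove] <;> first | noncomm_ring | abel
      have h3 := cent_add (cent_sub h1 h2) hs2c
      rw [e] at h3
      exact cent_of_mul hprime hsc hs0 h3
    -- x* + x is central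
    have hherm : ∀ x : R, ∀ r : R, (star x + x) * r = r * (star x + x) := by
      intro x
      have h := hskew (x * s)
      have e : star (x * s) - x * s = -((star x + x) * s) := by
        rw [star_mul, hss]
        simp only [sub_mul, mul_sub, add_mul, mul_add, neg_mul, mul_neg, mul_assoc, hsc', hmove] <;> first | noncomm_ring | abel
      rw [e] at h
      have h2 := cent_neg h
      rw [neg_neg] at h2
      exact cent_of_mul hprime hsc hs0 h2
    -- conclude
    intro u v
    have h := cent_add (hskew (star u)) (hherm (star u))
    have e : (star (star u) - star u) + (star (star u) + star u) = 2 * u := by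
      rw [star_star]; noncomm_ring
    rw [e] at h
    exact half_cent h2tor h v

end AuxComm

/-- Corollary 6.
Let `R` be a 2-torsion free prime ring with involution `*` of the second kind, and let
`F` be a generalized derivation of `R` associated with a nonzero derivation `d`.  Then
`F([x, x*]) ± d(x ∘ x*) ∈ Z(R)` for all `x ∈ R` if and only if `R` is an integral
domain (for either choice of sign). -/
theorem statement8 {R : Type*} [Ring R] [StarRing R]
    (hprime : ∀ a b : R, (∀ r : R, a * r * b = 0) → a = 0 ∨ b = 0)
    (h2tor : ∀ a : R, 2 * a = 0 → a = 0)
    (hsecond : ∃ s : R, (∀ r : R, s * r = r * s) ∧ star s = -s ∧ s ≠ 0)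
    (F d : R → R)
    (hd_add : ∀ x y : R, d (x + y) = d x + d y)
    (hd_mul : ∀ x y : R, d (x * y) = d x * y + x * d y)
    (hd_ne : ∃ x : R, d x ≠ 0)
    (hF_add : ∀ x y : R, F (x + y) = F x + F y)
    (hF_mul : ∀ x y : R, F (x * y) = F x * y + x * d y) :
    ((∀ x r : R,
        (F (x * star x - star x * x) + d (x * star x + star x * x)) * r
          = r * (F (x * star x - star x * x) + d (x * star x + star x * x)))
      ↔ ((0 : R) ≠ 1 ∧ (∀ a b : R, a * b = b * a) ∧
          (∀ a b : R, a * b = 0 → a = 0 ∨ b = 0)))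
    ∧
    ((∀ x r : R,
        (F (x * star x - star x * x) - d (x * star x + star x * x)) * r
          = r * (F (x * star x - star x * x) - d (x * star x + star x * x)))
      ↔ ((0 : R) ≠ 1 ∧ (∀ a b : R, a * b = b * a) ∧
          (∀ a b : R, a * b = 0 → a = 0 ∨ b = 0))) := by
  obtain ⟨s, hsc, hss, hs0⟩ := hsecond
  have post : (∀ a b : R, a * b = b * a) →
      ((0 : R) ≠ 1 ∧ (∀ a b : R, a * b = b * a) ∧
        (∀ a b : R, a * b = 0 → a = 0 ∨ b = 0)) := by
    intro hcomm
    refine ⟨?_, hcomm, ?_⟩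
    · intro h01
      exact hs0 (by rw [← mul_one s, ← h01, mul_zero])
    · intro a b hab
      exact hprime a b (fun r => by rw [hcomm a r, mul_assoc, hab, mul_zero])
  constructor
  · constructor
    · intro hmain
      apply post
      apply aux_comm hprime h2tor s hsc hss hs0 F d hd_add hd_mul hd_ne hF_add hF_mul
        1 (fun r => by rw [one_mul, mul_one]) (by rw [one_mul])
      intro x r
      simpa [one_mul] using hmain x r
    · exact fun h x r => h.2.1 _ r
  · constructor
    · intro hmain
      apply post
      apply aux_comm hprime h2tor s hsc hss hs0 F d hd_add hd_mul hd_ne hF_add hF_mul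
        (-1) (fun r => by rw [neg_one_mul, mul_neg_one]) (by rw [neg_one_mul, neg_neg])
      intro x r
      simpa [neg_one_mul, ← sub_eq_add_neg] using hmain x r
    · exact fun h x r => h.2.1 _ r
end

section
/- Let R be an associative ring with involution *, let P be a prime ideal of R such that R/P has characteristic different from 2, and suppose * is of P-second kind (Z(R) ∩ S(R) is not contained in P). If d₁ and d₂ are derivations of R such that the image of d₁(x)d₂(x*) lies in Z(R/P) for all x ∈ R, then d₁(R) ⊆ P, or d₂(R) ⊆ P, or R/P is an integral domain. -/
section Aux

variable {R : Type*} [Ring R] (P : TwoSidedIdeal R)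

/-- `a` commutes with everything modulo `P`. -/
def CenP (a : R) : Prop := ∀ r : R, a * r - r * a ∈ P

variable {P}

lemma CenP.add {a b : R} (ha : CenP P a) (hb : CenP P b) : CenP P (a + b) := by
  intro r
  have e : (a + b) * r - r * (a + b) = (a * r - r * a) + (b * r - r * b) := by noncomm_ring
  rw [e]; exact P.add_mem (ha r) (hb r)

lemma CenP.sub {a b : R} (ha : CenP P a) (hb : CenP P b) : CenP P (a - b) := by
  intro r
  have e : (a - b) * r - r * (a - b) = (a * r - r * a) - (b * r - r * b) := by noncomm_ring
  rw [e]; exact P.sub_mem (ha r) (hb r)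

lemma CenP.of_eq {a b : R} (e : a = b) (hb : CenP P b) : CenP P a := e ▸ hb

lemma CenP.smul {c a : R} (hc : ∀ r : R, c * r = r * c) (ha : CenP P a) :
    CenP P (c * a) := by
  intro r
  have e : (c * a) * r - r * (c * a) = c * (a * r - r * a) := by
    rw [mul_sub, mul_assoc, ← mul_assoc c r a, hc r, mul_assoc]
  rw [e]; exact P.mul_mem_left c _ (ha r)

lemma cancelP (hP_prime : ∀ a b : R, (∀ r : R, a * r * b ∈ P) → a ∈ P ∨ b ∈ P)
    {c : R} (hc : ∀ r : R, c * r - r * c ∈ P) (hcP : c ∉ P) {t : R} (hct : c * t ∈ P) :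
    t ∈ P := by
  refine (hP_prime c t fun r => ?_).resolve_left hcP
  have e : c * r * t = (c * r - r * c) * t + r * (c * t) := by noncomm_ring
  rw [e]; exact P.add_mem (P.mul_mem_right _ t (hc r)) (P.mul_mem_left r _ hct)

lemma CenP.cancel (hP_prime : ∀ a b : R, (∀ r : R, a * r * b ∈ P) → a ∈ P ∨ b ∈ P)
    {c a : R} (hc : ∀ r : R, c * r = r * c) (hcP : c ∉ P) (H : CenP P (c * a)) :
    CenP P a := by
  intro r
  have hc' : ∀ r' : R, c * r' - r' * c ∈ P := fun r' => by
    rw [hc r', sub_self]; exact P.zero_mem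
  refine cancelP hP_prime hc' hcP ?_
  have e : c * (a * r - r * a) = (c * a) * r - r * (c * a) := by
    rw [mul_sub, mul_assoc, ← mul_assoc c r a, hc r, mul_assoc]
  rw [e]; exact H r

end Aux

/-- Theorem 3.
Let `R` be a ring with involution `*`, `P` a prime ideal of `R` with `char (R/P) ≠ 2`
(equivalently, since `P` is proper, `(2 : R) ∉ P`), and suppose `*` is of `P`-second kind
(`Z(R) ∩ S(R) ⊄ P`).  If `d₁, d₂` are derivations of `R` such that the image of
`d₁(x)d₂(x*)` lies in `Z(R/P)` for all `x ∈ R`, then `d₁(R) ⊆ P`, or `d₂(R) ⊆ P`, or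
`R/P` is an integral domain. -/
theorem statement9 {R : Type*} [Ring R] [StarRing R] (P : TwoSidedIdeal R)
    (hP_proper : (1 : R) ∉ P)
    (hP_prime : ∀ a b : R, (∀ r : R, a * r * b ∈ P) → a ∈ P ∨ b ∈ P)
    (hchar : (2 : R) ∉ P)
    (hsecond : ∃ s : R, (∀ r : R, s * r = r * s) ∧ star s = -s ∧ s ∉ P)
    (d₁ d₂ : R → R)
    (hd₁_add : ∀ x y : R, d₁ (x + y) = d₁ x + d₁ y)
    (hd₁_mul : ∀ x y : R, d₁ (x * y) = d₁ x * y + x * d₁ y)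
    (hd₂_add : ∀ x y : R, d₂ (x + y) = d₂ x + d₂ y)
    (hd₂_mul : ∀ x y : R, d₂ (x * y) = d₂ x * y + x * d₂ y)
    -- `d₁(x)d₂(x*)` is central modulo `P` for all `x`
    (h : ∀ x r : R, (d₁ x * d₂ (star x)) * r - r * (d₁ x * d₂ (star x)) ∈ P) :
    (∀ x : R, d₁ x ∈ P) ∨ (∀ x : R, d₂ x ∈ P)
      ∨ ((1 : R) ∉ P ∧ (∀ x y : R, x * y - y * x ∈ P) ∧
          (∀ x y : R, x * y ∈ P → x ∈ P ∨ y ∈ P)) := by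
  obtain ⟨s, hs, hss, hsP⟩ := hsecond
  have h2comm : ∀ r : R, (2 : R) * r = r * 2 := fun r => by rw [two_mul, mul_two]
  -- basic facts about the derivations
  have hd₁0 : d₁ 0 = 0 := by
    have h0 := hd₁_add 0 0
    rw [add_zero] at h0
    have : d₁ 0 + 0 = d₁ 0 + d₁ 0 := by rw [add_zero]; exact h0
    exact (add_left_cancel this).symm
  have hd₂0 : d₂ 0 = 0 := by
    have h0 := hd₂_add 0 0
    rw [add_zero] at h0
    have : d₂ 0 + 0 = d₂ 0 + d₂ 0 := by rw [add_zero]; exact h0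
    exact (add_left_cancel this).symm
  have hd₁neg : ∀ y : R, d₁ (-y) = -d₁ y := by
    intro y
    have h0 := hd₁_add y (-y)
    rw [add_neg_cancel, hd₁0] at h0
    exact (eq_neg_of_add_eq_zero_right h0.symm)
  -- centrality of d₁ s and d₂ s
  have hc₁ : ∀ r : R, d₁ s * r = r * d₁ s := by
    intro r
    have e1 := hd₁_mul s r
    have e2 := hd₁_mul r s
    rw [hs r] at e1
    rw [e2, ← hs (d₁ r)] at e1
    have e3 : d₁ s * r + s * d₁ r = r * d₁ s + s * d₁ r := by
      rw [← e1]; rw [add_comm]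
    exact add_right_cancel e3
  have hc₂ : ∀ r : R, d₂ s * r = r * d₂ s := by
    intro r
    have e1 := hd₂_mul s r
    have e2 := hd₂_mul r s
    rw [hs r] at e1
    rw [e2, ← hs (d₂ r)] at e1
    have e3 : d₂ s * r + s * d₂ r = r * d₂ s + s * d₂ r := by
      rw [← e1]; rw [add_comm]
    exact add_right_cancel e3
  set c₁ := d₁ s with hc₁def
  set c₂ := d₂ s with hc₂def
  have hsu_star : ∀ u : R, star (s * u) = -(s * star u) := by
    intro u
    rw [star_mul, hss, mul_neg, ← hs (star u)]
  have hd₂su : ∀ u : R, d₂ (s * u) = c₂ * u + s * d₂ u := fun u => hd₂_mul s u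
  have hd₁su_star : ∀ u : R, d₁ (star (s * u)) = -(c₁ * star u + s * d₁ (star u)) := by
    intro u
    rw [hsu_star u, hd₁neg, hd₁_mul s (star u)]
  have sw : ∀ (c : R), (∀ r : R, c * r = r * c) → ∀ a b : R, a * (c * b) = c * (a * b) :=
    fun c hc a b => by rw [← mul_assoc, ← hc, mul_assoc]
  -- Step 1: linearization
  have hA' : ∀ x u : R, CenP P (d₁ x * d₂ u + d₁ (star u) * d₂ (star x)) := by
    intro x u
    have Hxu : CenP P (d₁ (x + star u) * d₂ (star (x + star u))) := h (x + star u)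
    have Hx : CenP P (d₁ x * d₂ (star x)) := h x
    have Hu : CenP P (d₁ (star u) * d₂ u) := by
      intro r
      have := h (star u) r
      rwa [star_star] at this
    refine CenP.of_eq ?_ ((Hxu.sub (Hx.add Hu)))
    rw [star_add, star_star, hd₁_add, hd₂_add]
    noncomm_ring
  -- Step 2: identity (I)
  have hI : ∀ x u : R, CenP P
      (s * (d₁ x * d₂ u - d₁ (star u) * d₂ (star x))
        + (c₂ * (d₁ x * u) - c₁ * (star u * d₂ (star x)))) := by
    intro x u
    refine CenP.of_eq ?_ (hA' x (s * u))
    rw [hd₂su, hd₁su_star, mul_add (d₁ x), sw c₂ hc₂ (d₁ x) u, sw s hs (d₁ x) (d₂ u)]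
    noncomm_ring
  -- Step 3: K is central mod P
  have hK : ∀ x u : R, CenP P (c₂ * (d₁ x * u) + c₁ * (star u * d₂ (star x))) := by
    intro x u
    have H := hI x (s * u)
    have e : s * (d₁ x * d₂ (s * u) - d₁ (star (s * u)) * d₂ (star x))
          + (c₂ * (d₁ x * (s * u)) - c₁ * (star (s * u) * d₂ (star x)))
        = s * (s * (d₁ x * d₂ u + d₁ (star u) * d₂ (star x)))
          + 2 * (s * (c₂ * (d₁ x * u) + c₁ * (star u * d₂ (star x)))) := by
      rw [hd₂su, hd₁su_star, hsu_star, mul_add (d₁ x), sw c₂ hc₂ (d₁ x) u,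
        sw s hs (d₁ x) (d₂ u), sw s hs (d₁ x) u, sw s hs c₂ (d₁ x * u)]
      rw [show c₁ * (-(s * star u) * d₂ (star x))
            = -(s * (c₁ * (star u * d₂ (star x)))) from by
        rw [neg_mul, mul_neg, mul_assoc, sw s hs c₁ (star u * d₂ (star x))]]
      noncomm_ring
    have H2 : CenP P (s * (s * (d₁ x * d₂ u + d₁ (star u) * d₂ (star x)))
        + 2 * (s * (c₂ * (d₁ x * u) + c₁ * (star u * d₂ (star x))))) :=
      CenP.of_eq e.symm H
    have hA's : CenP P (s * (s * (d₁ x * d₂ u + d₁ (star u) * d₂ (star x)))) :=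
      CenP.smul hs (CenP.smul hs (hA' x u))
    have h2sK : CenP P (2 * (s * (c₂ * (d₁ x * u) + c₁ * (star u * d₂ (star x))))) := by
      refine CenP.of_eq ?_ (H2.sub hA's)
      noncomm_ring
    exact CenP.cancel hP_prime hs hsP
      (CenP.cancel hP_prime h2comm hchar h2sK)
  -- Step 4: G is central mod P
  have hG : ∀ x u : R, CenP P (c₂ * (d₁ x * u) - c₁ * (star u * d₂ (star x))) := by
    intro x u
    have H := hK x (s * u)
    have e : c₂ * (d₁ x * (s * u)) + c₁ * (star (s * u) * d₂ (star x))
        = s * (c₂ * (d₁ x * u) - c₁ * (star u * d₂ (star x))) := by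
      rw [hsu_star, sw s hs (d₁ x) u, sw s hs c₂ (d₁ x * u)]
      have e2 : c₁ * (-(s * star u) * d₂ (star x)) = -(s * (c₁ * (star u * d₂ (star x)))) := by
        rw [neg_mul, mul_neg, mul_assoc, sw s hs c₁ (star u * d₂ (star x))]
      rw [e2]
      noncomm_ring
    exact CenP.cancel hP_prime hs hsP (CenP.of_eq e.symm H)
  -- Step 5: D is central, hence d₁ x * d₂ u is central mod P
  have key : ∀ x u : R, CenP P (d₁ x * d₂ u) := by
    intro x u
    have hsD : CenP P (s * (d₁ x * d₂ u - d₁ (star u) * d₂ (star x))) := by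
      refine CenP.of_eq ?_ ((hI x u).sub (hG x u))
      noncomm_ring
    have hD : CenP P (d₁ x * d₂ u - d₁ (star u) * d₂ (star x)) :=
      CenP.cancel hP_prime hs hsP hsD
    have h2 : CenP P (2 * (d₁ x * d₂ u)) := by
      refine CenP.of_eq ?_ ((hA' x u).add hD)
      noncomm_ring
    exact CenP.cancel hP_prime h2comm hchar h2
  -- Endgame
  by_cases hall : ∀ x u : R, d₁ x * d₂ u ∈ P
  · by_cases h1 : ∀ x : R, d₁ x ∈ P
    · exact Or.inl h1
    · push_neg at h1
      obtain ⟨a, ha⟩ := h1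
      refine Or.inr (Or.inl fun u => ?_)
      refine (hP_prime (d₁ a) (d₂ u) fun r => ?_).resolve_left ha
      have e : d₁ a * r * d₂ u = d₁ a * d₂ (r * u) - (d₁ a * d₂ r) * u := by
        rw [hd₂_mul]; noncomm_ring
      rw [e]
      exact P.sub_mem (hall a (r * u)) (P.mul_mem_right _ u (hall a r))
  · push_neg at hall
    obtain ⟨a, b, hγ⟩ := hall
    refine Or.inr (Or.inr ?_)
    -- ingredient 1
    have ing1 : ∀ x u v r : R,
        (d₁ x * d₂ u) * (v * r - r * v) + ((d₁ x * u * d₂ v) * r - r * (d₁ x * u * d₂ v)) ∈ P := by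
      intro x u v r
      have H : CenP P ((d₁ x * d₂ u) * v + d₁ x * u * d₂ v) := by
        refine CenP.of_eq ?_ (key x (u * v))
        rw [hd₂_mul]; noncomm_ring
      have H1 := H r
      have Hz := P.mul_mem_right _ v (key x u r)  -- (z*r - r*z)*v ∈ P
      have e : (d₁ x * d₂ u) * (v * r - r * v)
            + ((d₁ x * u * d₂ v) * r - r * (d₁ x * u * d₂ v))
          = (((d₁ x * d₂ u) * v + d₁ x * u * d₂ v) * r
              - r * ((d₁ x * d₂ u) * v + d₁ x * u * d₂ v))
            - ((d₁ x * d₂ u * r - r * (d₁ x * d₂ u)) * v) := by noncomm_ring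
      rw [e]
      exact P.sub_mem H1 Hz
    -- ingredient 2
    have ing2 : ∀ x u v r : R,
        (d₁ u * d₂ v) * (x * r - r * x) + ((d₁ x * u * d₂ v) * r - r * (d₁ x * u * d₂ v)) ∈ P := by
      intro x u v r
      have H : CenP P (d₁ x * u * d₂ v + x * (d₁ u * d₂ v)) := by
        refine CenP.of_eq ?_ (key (x * u) v)
        rw [hd₁_mul]; noncomm_ring
      have H1 := H r
      have Hw1 := P.mul_mem_left x _ (key u v r)   -- x * (w*r - r*w) ∈ P
      have Hw2 := key u v (x * r - r * x)          -- w*(xr-rx) - (xr-rx)*w ∈ P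
      have e : (d₁ u * d₂ v) * (x * r - r * x)
            + ((d₁ x * u * d₂ v) * r - r * (d₁ x * u * d₂ v))
          = ((d₁ x * u * d₂ v + x * (d₁ u * d₂ v)) * r
              - r * (d₁ x * u * d₂ v + x * (d₁ u * d₂ v)))
            - (x * ((d₁ u * d₂ v) * r - r * (d₁ u * d₂ v)))
            + ((d₁ u * d₂ v) * (x * r - r * x) - (x * r - r * x) * (d₁ u * d₂ v)) := by
        noncomm_ring
      rw [e]
      exact P.add_mem (P.sub_mem H1 Hw1) Hw2
    -- (IX)
    have IX : ∀ x u v r : R,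
        (d₁ x * d₂ u) * (v * r - r * v) - (d₁ u * d₂ v) * (x * r - r * x) ∈ P := by
      intro x u v r
      have := P.sub_mem (ing1 x u v r) (ing2 x u v r)
      have e : ((d₁ x * d₂ u) * (v * r - r * v) + ((d₁ x * u * d₂ v) * r - r * (d₁ x * u * d₂ v)))
            - ((d₁ u * d₂ v) * (x * r - r * x) + ((d₁ x * u * d₂ v) * r - r * (d₁ x * u * d₂ v)))
          = (d₁ x * d₂ u) * (v * r - r * v) - (d₁ u * d₂ v) * (x * r - r * x) := by
        noncomm_ring
      rwa [e] at this
    have hγC : CenP P (d₁ a * d₂ b) := key a b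
    have hγC' : ∀ r' : R, (d₁ a * d₂ b) * r' - r' * (d₁ a * d₂ b) ∈ P := hγC
    -- a is central mod P
    have haZ : ∀ v : R, a * v - v * a ∈ P := by
      intro v
      have H := IX a b v a
      rw [sub_self, mul_zero, sub_zero] at H
      have := cancelP hP_prime hγC' hγ H
      have e : a * v - v * a = -(v * a - a * v) := by noncomm_ring
      rw [e]; exact P.neg_mem this
    have comm : ∀ v r : R, v * r - r * v ∈ P := by
      intro v r
      have H := IX a b v r
      have Hz := P.mul_mem_left (d₁ b * d₂ v) _ (haZ r)
      have e : (d₁ a * d₂ b) * (v * r - r * v)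
          = ((d₁ a * d₂ b) * (v * r - r * v) - (d₁ b * d₂ v) * (a * r - r * a))
            + (d₁ b * d₂ v) * (a * r - r * a) := by noncomm_ring
      have : (d₁ a * d₂ b) * (v * r - r * v) ∈ P := by
        rw [e]; exact P.add_mem H Hz
      exact cancelP hP_prime hγC' hγ this
    refine ⟨hP_proper, comm, fun x y hxy => hP_prime x y fun r => ?_⟩
    have e : x * r * y = (x * r - r * x) * y + r * (x * y) := by noncomm_ring
    rw [e]
    exact P.add_mem (P.mul_mem_right _ y (comm x r)) (P.mul_mem_left r _ hxy)
end

section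
/- Let R be an associative ring with involution *, let P be a prime ideal of R such that R/P has characteristic different from 2, and suppose * is of P-second kind (Z(R) ∩ S(R) is not contained in P). If d is a derivation of R such that the image of d(x)d(x*) lies in Z(R/P) for all x ∈ R, then d(R) ⊆ P or R/P is an integral domain. -/
/-!
Pass to the prime ring `Q = R/P` through the quotient map `f` and put `D = f ∘ d`, so that
`D (x * y) = D x * f y + f x * D y` and `D x * D (x*)` is central. Fix a central skew `s` with
`f s ≠ 0`; central elements of a prime ring are regular, so `f s`, `2` and `D s` (when nonzero)
can be cancelled from central elements. Linearizing gives `D x * D (y*) + D y * D (x*)` central.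
If `D s = 0`, replacing `y` by `s * y` shows that every `D x * D y` is central. If `D s ≠ 0`,
replacing `x` by `s` shows that `D` is central on skew elements; applied to `s * (s * (y - y*))`
this makes `y - y*`, hence `s * (y + y*)`, hence every `y` central modulo `P`.

So if `Q` is not commutative, all `D x * D y` are central. Then the central element `D w * D r`
annihilates the commutator of `D x * q` with `f r`, so each `r` has `f r` central or
`D w * D r = 0` for all `w`. A group is not a union of two proper subgroups, and `R` is not
mapped into the center, so `D R * D R = 0`; then
`D x * f r * D x = D x * D (r * x) - D x * D r * f x = 0` and primeness gives `D x = 0`.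
-/

open Subring

def IsPrimeRing (Q : Type*) [Ring Q] : Prop :=
  ∀ a b : Q, (∀ r, a * r * b = 0) → a = 0 ∨ b = 0

namespace IsPrimeRing

variable {Q : Type*} [Ring Q] {a b c v : Q}

lemma eq_zero_of_mul_eq_zero_of_mem_center (hQ : IsPrimeRing Q) (hc : c ∈ center Q)
    (hc0 : c ≠ 0) (h : c * b = 0) : b = 0 :=
  (hQ c b fun r => by rw [← mem_center_iff.1 hc r, mul_assoc, h, mul_zero]).resolve_left hc0

lemma mem_center_of_mul_mem_center (hQ : IsPrimeRing Q) (hc : c ∈ center Q) (hc0 : c ≠ 0)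
    (h : c * b ∈ center Q) : b ∈ center Q := by
  refine mem_center_iff.2 fun g =>
    sub_eq_zero.1 (hQ.eq_zero_of_mul_eq_zero_of_mem_center hc hc0 ?_)
  rw [mul_sub, ← mul_assoc, ← mem_center_iff.1 hc g, mul_assoc, mem_center_iff.1 h,
    ← mul_assoc, sub_self]

lemma mem_center_of_add_self_mem_center (hQ : IsPrimeRing Q) (h2 : (2 : Q) ≠ 0)
    (h : b + b ∈ center Q) : b ∈ center Q :=
  hQ.mem_center_of_mul_mem_center (Set.ofNat_mem_center Q 2) h2 (by rwa [two_mul])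

lemma eq_zero_or_mem_center_of_commute_mul (hQ : IsPrimeRing Q)
    (h : ∀ q, Commute (a * q) v) : a = 0 ∨ v ∈ center Q := by
  have hav : ∀ q, a * (q * v - v * q) = 0 := fun q => by
    have h1 := h 1
    rw [mul_one] at h1
    rw [mul_sub, ← mul_assoc, (h q).eq, ← mul_assoc a v, h1.eq, ← mul_assoc, sub_self]
  refine (or_iff_not_imp_left.2 fun ha => mem_center_iff.2 fun q => ?_)
  refine sub_eq_zero.1 ((hQ a _ fun z => ?_).resolve_left ha)
  calc a * z * (q * v - v * q) = a * (z * q * v - v * (z * q)) - a * (z * v - v * z) * q := by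
        noncomm_ring
    _ = 0 := by rw [hav, hav, zero_mul, sub_zero]

lemma eq_zero_or_eq_zero_of_mul_eq_zero (hQ : IsPrimeRing Q) (hcomm : ∀ a b : Q, a * b = b * a)
    (h : a * b = 0) : a = 0 ∨ b = 0 :=
  hQ a b fun r => by rw [hcomm a r, mul_assoc, h, mul_zero]

end IsPrimeRing

lemma commute_of_mem_center {Q : Type*} [Ring Q] {c : Q} (h : c ∈ center Q) (g : Q) :
    Commute c g :=
  (mem_center_iff.1 h g).symm

section DerivationAlong

variable {R Q : Type*} [Ring R] [Ring Q] {f : R →+* Q} {D : R →+ Q}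

lemma map_mem_center_of_surjective (hf : Function.Surjective f) {a : R}
    (h : ∀ r, f (a * r) = f (r * a)) : f a ∈ center Q :=
  mem_center_iff.2 fun q => by
    obtain ⟨r, rfl⟩ := hf q
    simpa only [map_mul] using (h r).symm

lemma map_mem_center_of_forall_mul_eq (hf : Function.Surjective f)
    (hD : ∀ x y, D (x * y) = D x * f y + f x * D y) {s : R} (hs : ∀ r, s * r = r * s) :
    D s ∈ center Q := by
  have hfs := map_mem_center_of_surjective hf fun r => congrArg f (hs r)
  refine mem_center_iff.2 fun q => ?_
  obtain ⟨r, rfl⟩ := hf q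
  have := congrArg D (hs r)
  rw [hD, hD, ← mem_center_iff.1 hfs (D r), add_comm (D r * f s)] at this
  exact (add_right_cancel this).symm

lemma commute_mul_mul_map (hf : Function.Surjective f)
    (hD : ∀ x y, D (x * y) = D x * f y + f x * D y) (hB : ∀ x y, D x * D y ∈ center Q)
    (x r : R) (q : Q) : Commute (D x * q * D r) (f r) := by
  obtain ⟨m, rfl⟩ := hf q
  have e : D x * f m * D r = D x * D (m * r) - D x * D m * f r := by
    rw [hD, mul_add, ← mul_assoc, ← mul_assoc, add_sub_cancel_left]
  rw [e]
  exact (commute_of_mem_center (hB x _) _).sub_left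
    ((commute_of_mem_center (hB x m) _).mul_left (Commute.refl _))

lemma mul_map_mul_sub_mul_eq_zero (hf : Function.Surjective f)
    (hD : ∀ x y, D (x * y) = D x * f y + f x * D y) (hB : ∀ x y, D x * D y ∈ center Q)
    (x w r : R) (q : Q) : D w * D r * (D x * q * f r - f r * (D x * q)) = 0 := by
  have hc := mem_center_iff.1 (hB w r)
  have := (commute_mul_mul_map hf hD hB x r (q * D w)).eq
  rw [mul_sub, ← mul_assoc, ← hc (D x * q), ← hc (f r * (D x * q)), mul_assoc (f r)]
  simpa only [mul_assoc, sub_eq_zero] using this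

lemma mem_center_or_mul_map_eq_zero (hQ : IsPrimeRing Q) (hf : Function.Surjective f)
    (hD : ∀ x y, D (x * y) = D x * f y + f x * D y) (hB : ∀ x y, D x * D y ∈ center Q)
    {x₀ : R} (hx₀ : D x₀ ≠ 0) (r : R) : f r ∈ center Q ∨ ∀ w, D w * D r = 0 := by
  refine or_iff_not_imp_right.2 fun hr => ?_
  obtain ⟨w, hw⟩ := not_forall.1 hr
  refine (hQ.eq_zero_or_mem_center_of_commute_mul fun q => ?_).resolve_left hx₀
  exact sub_eq_zero.1 (hQ.eq_zero_of_mul_eq_zero_of_mem_center (hB w r) hw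
    (mul_map_mul_sub_mul_eq_zero hf hD hB x₀ w r q))

lemma map_eq_zero_of_mul_map_eq_zero (hQ : IsPrimeRing Q) (hf : Function.Surjective f)
    (hD : ∀ x y, D (x * y) = D x * f y + f x * D y) (h : ∀ w r, D w * D r = 0) (x : R) :
    D x = 0 := by
  refine (hQ (D x) (D x) fun q => ?_).elim id id
  obtain ⟨r, rfl⟩ := hf q
  have := h x (r * x)
  rwa [hD, mul_add, ← mul_assoc, h, zero_mul, zero_add, ← mul_assoc] at this

lemma map_eq_zero_of_mul_map_mem_center (hQ : IsPrimeRing Q) (hf : Function.Surjective f)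
    (hD : ∀ x y, D (x * y) = D x * f y + f x * D y) (hnc : ¬∀ a b : Q, a * b = b * a)
    (hB : ∀ x y, D x * D y ∈ center Q) (x : R) : D x = 0 := by
  by_contra hx
  let A : AddSubgroup R := (center Q).toAddSubgroup.comap f.toAddMonoidHom
  let B : AddSubgroup R := ⨅ w, ((AddMonoidHom.mulLeft (D w)).comp D).ker
  have hAB : ((⊤ : AddSubgroup R) : Set R) ⊆ A ∪ B := fun r _ =>
    (mem_center_or_mul_map_eq_zero hQ hf hD hB hx r).imp id fun h =>
      AddSubgroup.mem_iInf.2 fun w => h w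
  rcases AddSubgroupClass.subset_union.1 hAB with hA | hB
  · refine hnc fun a b => ?_
    obtain ⟨r, rfl⟩ := hf b
    exact mem_center_iff.1 (hA (AddSubgroup.mem_top r)) a
  · exact hx (map_eq_zero_of_mul_map_eq_zero hQ hf hD
      (fun w r => AddSubgroup.mem_iInf.1 (hB (AddSubgroup.mem_top r)) w) x)

lemma mul_map_star_add_mem_center [StarAddMonoid R]
    (h : ∀ x, D x * D (star x) ∈ center Q) (x y : R) :
    D x * D (star y) + D y * D (star x) ∈ center Q := by
  have := sub_mem (sub_mem (h (x + y)) (h x)) (h y)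
  convert this using 1
  simp only [star_add, map_add, add_mul, mul_add]
  abel

variable [StarRing R] {s : R}

lemma mul_map_star_mem_center_of_map_eq_zero (hQ : IsPrimeRing Q) (h2 : (2 : Q) ≠ 0)
    (hf : Function.Surjective f) (hD : ∀ x y, D (x * y) = D x * f y + f x * D y)
    (hs : ∀ r, s * r = r * s) (hss : star s = -s) (hfs0 : f s ≠ 0) (hDs : D s = 0)
    (h : ∀ x, D x * D (star x) ∈ center Q) (x y : R) :
    D y * D (star x) ∈ center Q := by
  have hfs := map_mem_center_of_surjective hf fun r => congrArg f (hs r)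
  have hDsy : D (s * y) = f s * D y := by rw [hD, hDs, zero_mul, zero_add]
  have hDssy : D (star (s * y)) = -(f s * D (star y)) := by
    rw [star_mul, hss, mul_neg, map_neg, hD, hDs, mul_zero, add_zero, mem_center_iff.1 hfs]
  have h1 := mul_map_star_add_mem_center h x (s * y)
  rw [hDsy, hDssy] at h1
  have := add_mem h1 (mul_mem hfs (mul_map_star_add_mem_center h x y))
  refine hQ.mem_center_of_add_self_mem_center h2 (hQ.mem_center_of_mul_mem_center hfs hfs0 ?_)
  convert this using 1
  rw [mul_neg, ← mul_assoc (D x), mem_center_iff.1 hfs (D x)]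
  noncomm_ring

lemma commute_of_map_ne_zero (hQ : IsPrimeRing Q) (h2 : (2 : Q) ≠ 0)
    (hf : Function.Surjective f) (hD : ∀ x y, D (x * y) = D x * f y + f x * D y)
    (hs : ∀ r, s * r = r * s) (hss : star s = -s) (hfs0 : f s ≠ 0) (hDs : D s ≠ 0)
    (h : ∀ x, D x * D (star x) ∈ center Q) (a b : Q) : a * b = b * a := by
  have hfs := map_mem_center_of_surjective hf fun r => congrArg f (hs r)
  have hDsc := map_mem_center_of_forall_mul_eq hf hD hs
  have hstar_sub : ∀ y, D (star y) - D y ∈ center Q := fun y => by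
    have := mul_map_star_add_mem_center h s y
    rw [hss, map_neg, mul_neg, mem_center_iff.1 hDsc, ← sub_eq_add_neg, ← mul_sub] at this
    exact hQ.mem_center_of_mul_mem_center hDsc hDs this
  have hskew : ∀ z, star z = -z → D z ∈ center Q := fun z hz => by
    have := hstar_sub z
    rw [hz, map_neg, ← neg_add', neg_mem_iff] at this
    exact hQ.mem_center_of_add_self_mem_center h2 this
  have hc0 : D s * f s ≠ 0 := fun h0 => hfs0 (hQ.eq_zero_of_mul_eq_zero_of_mem_center hDsc hDs h0)
  have hsub : ∀ y, f (y - star y) ∈ center Q := fun y => by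
    set w := y - star y
    have hw : star w = -w := by rw [star_sub, star_star, neg_sub]
    have hssw : star (s * (s * w)) = -(s * (s * w)) := by
      rw [star_mul, star_mul, hss, hw, neg_mul_neg, mul_neg, ← hs w, mul_assoc, ← hs w]
    have hDw : D w ∈ center Q := by
      rw [map_sub, ← neg_sub]
      exact neg_mem (hstar_sub y)
    have := sub_mem (hskew _ hssw) (mul_mem (mul_mem hfs hfs) hDw)
    refine hQ.mem_center_of_add_self_mem_center h2
      (hQ.mem_center_of_mul_mem_center (mul_mem hDsc hfs) hc0 ?_)
    convert this using 1
    rw [hD, hD, map_mul, ← mul_assoc (D s) (f s), mem_center_iff.1 hfs (D s)]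
    noncomm_ring
  have hmem : ∀ y, f y ∈ center Q := fun y => by
    have := hsub (s * y)
    rw [star_mul, hss, mul_neg, ← hs, sub_neg_eq_add, ← mul_add, map_mul] at this
    have := add_mem (hQ.mem_center_of_mul_mem_center hfs hfs0 this) (hsub y)
    rw [← map_add, add_add_sub_cancel, map_add] at this
    exact hQ.mem_center_of_add_self_mem_center h2 this
  obtain ⟨y, rfl⟩ := hf b
  exact mem_center_iff.1 (hmem y) a

lemma mul_map_mem_center_of_mul_map_star_mem_center (hQ : IsPrimeRing Q) (h2 : (2 : Q) ≠ 0)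
    (hf : Function.Surjective f) (hD : ∀ x y, D (x * y) = D x * f y + f x * D y)
    (hs : ∀ r, s * r = r * s) (hss : star s = -s) (hfs0 : f s ≠ 0)
    (h : ∀ x, D x * D (star x) ∈ center Q) (hnc : ¬∀ a b : Q, a * b = b * a) (x y : R) :
    D x * D y ∈ center Q := by
  by_cases hDs : D s = 0
  · simpa only [star_star] using
      mul_map_star_mem_center_of_map_eq_zero hQ h2 hf hD hs hss hfs0 hDs h (star y) x
  · exact absurd (commute_of_map_ne_zero hQ h2 hf hD hs hss hfs0 hDs h) hnc

end DerivationAlong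

lemma TwoSidedIdeal.mk'_eq_zero_iff {R : Type*} [Ring R] (P : TwoSidedIdeal R) (x : R) :
    P.ringCon.mk' x = 0 ↔ x ∈ P := by
  rw [← TwoSidedIdeal.mem_ker, TwoSidedIdeal.ker_ringCon_mk']

lemma TwoSidedIdeal.isPrimeRing_quotient {R : Type*} [Ring R] (P : TwoSidedIdeal R)
    (hP : ∀ a b : R, (∀ r : R, a * r * b ∈ P) → a ∈ P ∨ b ∈ P) :
    IsPrimeRing P.ringCon.Quotient := by
  intro a b h
  obtain ⟨x, rfl⟩ := P.ringCon.mk'_surjective a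
  obtain ⟨y, rfl⟩ := P.ringCon.mk'_surjective b
  simp only [P.mk'_eq_zero_iff]
  exact hP x y fun r => by simpa only [← map_mul, P.mk'_eq_zero_iff] using h (P.ringCon.mk' r)

/-- Corollary 7.
Let `R` be a ring with involution `*`, `P` a prime ideal of `R` with `char (R/P) ≠ 2`
(equivalently, since `P` is proper, `(2 : R) ∉ P`), and suppose `*` is of `P`-second kind
(`Z(R) ∩ S(R) ⊄ P`).  If `d` is a derivation of `R` such that the image of `d(x)d(x*)`
lies in `Z(R/P)` for all `x ∈ R`, then `d(R) ⊆ P` or `R/P` is an integral domain. -/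
theorem statement10 {R : Type*} [Ring R] [StarRing R] (P : TwoSidedIdeal R)
    (hP_proper : (1 : R) ∉ P)
    (hP_prime : ∀ a b : R, (∀ r : R, a * r * b ∈ P) → a ∈ P ∨ b ∈ P)
    (hchar : (2 : R) ∉ P)
    (hsecond : ∃ s : R, (∀ r : R, s * r = r * s) ∧ star s = -s ∧ s ∉ P)
    (d : R → R)
    (hd_add : ∀ x y : R, d (x + y) = d x + d y)
    (hd_mul : ∀ x y : R, d (x * y) = d x * y + x * d y)
    -- `d(x)d(x*)` is central modulo `P` for all `x`
    (h : ∀ x r : R, (d x * d (star x)) * r - r * (d x * d (star x)) ∈ P) :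
    (∀ x : R, d x ∈ P)
      ∨ ((1 : R) ∉ P ∧ (∀ x y : R, x * y - y * x ∈ P) ∧
          (∀ x y : R, x * y ∈ P → x ∈ P ∨ y ∈ P)) := by
  obtain ⟨s, hs, hss, hsP⟩ := hsecond
  set f := P.ringCon.mk'
  have hf : Function.Surjective f := P.ringCon.mk'_surjective
  have hfP : ∀ x, f x = 0 ↔ x ∈ P := P.mk'_eq_zero_iff
  have hQ := P.isPrimeRing_quotient hP_prime
  by_cases hcomm : ∀ a b : P.ringCon.Quotient, a * b = b * a
  · refine Or.inr ⟨hP_proper, fun x y => ?_, fun x y hxy => ?_⟩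
    · rw [← hfP, map_sub, map_mul, map_mul, hcomm, sub_self]
    · exact (hQ.eq_zero_or_eq_zero_of_mul_eq_zero hcomm (by rwa [← map_mul f, hfP])).imp
        (hfP x).1 (hfP y).1
  let D : R →+ P.ringCon.Quotient := f.toAddMonoidHom.comp (AddMonoidHom.mk' d hd_add)
  have hD : ∀ x y, D (x * y) = D x * f y + f x * D y := fun x y => by
    simp only [D, AddMonoidHom.coe_comp, AddMonoidHom.mk'_apply, Function.comp_apply,
      RingHom.toAddMonoidHom_eq_coe, AddMonoidHom.coe_coe, hd_mul, map_add, map_mul]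
  have h2 : (2 : P.ringCon.Quotient) ≠ 0 := by rwa [← map_ofNat f 2, Ne, hfP]
  have hfs0 : f s ≠ 0 := by rwa [Ne, hfP]
  have hDD : ∀ x, D x * D (star x) ∈ center _ := fun x => by
    show f (d x) * f (d (star x)) ∈ _
    rw [← map_mul]
    exact map_mem_center_of_surjective hf fun r => by
      rw [← sub_eq_zero, ← map_sub, hfP]
      exact h x r
  have hB := mul_map_mem_center_of_mul_map_star_mem_center hQ h2 hf hD hs hss hfs0 hDD hcomm
  exact Or.inl fun x => (hfP _).1 (map_eq_zero_of_mul_map_mem_center hQ hf hD hcomm hB x)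
end

section
/- Let R be a 2-torsion free prime ring with involution * of the second kind (Z(R) ∩ S(R) ≠ {0}), and let d₁ and d₂ be nonzero derivations of R. Then d₁(x)d₂(x*) ∈ Z(R) for all x ∈ R if and only if R is an integral domain. -/
/-!
Linearizing the hypothesis, `d₁(x)d₂(y*) + d₁(y)d₂(x*)` is central. For a nonzero central `s`
with `s* = -s`, substituting `y ↦ s y` and subtracting `s` times the old expression kills the
terms that are `s`-linear in `y` and doubles those that are `s`-antilinear. Iterating, and
cancelling the central factors `2` and `s` (regular since `R` is 2-torsion free and prime), shows
that `d₁(x)d₂(y)` is central for all `x, y`.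

For `a = d₁(x₀) ≠ 0`, a Posner-type argument gives, for every `r`, either `a d₂(r) = 0` or `r`
central. A group is not a union of two proper subgroups, and `a d₂(R) = 0` is impossible in a
prime ring, so `R` is commutative; a commutative prime ring is a domain.
-/

open Subring

section
variable {R : Type*} [Ring R]

theorem commute_of_mem_center_s11 {c : R} (hc : c ∈ center R) (a : R) : Commute a c :=
  mem_center_iff.mp hc a

theorem mem_center_of_mul_mem_center {c z : R} (hc : c ∈ center R) (hreg : IsLeftRegular c)
    (hcz : c * z ∈ center R) : z ∈ center R :=
  mem_center_iff.mpr fun g => hreg <| show c * (g * z) = c * (z * g) by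
    rw [← (commute_of_mem_center_s11 hc g).left_comm, mem_center_iff.mp hcz, mul_assoc]

theorem isLeftRegular_of_mem_center_of_ne_zero
    (hprime : ∀ a b : R, (∀ r : R, a * r * b = 0) → a = 0 ∨ b = 0)
    {c : R} (hc : c ∈ center R) (hc0 : c ≠ 0) : IsLeftRegular c :=
  isLeftRegular_iff_right_eq_zero_of_mul.mpr fun w hw =>
    (hprime c w fun r => by rw [← mem_center_iff.mp hc r, mul_assoc, hw, mul_zero]).resolve_left hc0

theorem mem_center_of_forall_commute_mul_right
    (hprime : ∀ a b : R, (∀ r : R, a * r * b = 0) → a = 0 ∨ b = 0)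
    {b r : R} (hb : b ≠ 0) (h : ∀ y, Commute (y * b) r) : r ∈ center R := by
  refine mem_center_iff.mpr fun z => ?_
  have hzero : ∀ y, (z * r - r * z) * y * b = 0 := fun y => by
    have h₁ := (h (z * y)).eq
    have h₂ := congrArg (z * ·) (h y).eq
    simp only [mul_assoc, sub_mul] at h₁ h₂ ⊢
    rw [← h₂, h₁, sub_self]
  exact sub_eq_zero.mp ((hprime _ b hzero).resolve_right hb)

theorem map_mem_center_of_leibniz (d : R →+ R) (hd : ∀ x y, d (x * y) = d x * y + x * d y)
    {s : R} (hs : s ∈ center R) : d s ∈ center R := by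
  refine mem_center_iff.mpr fun r => ?_
  have h := hd r s
  rw [mem_center_iff.mp hs r, hd, mem_center_iff.mp hs (d r), add_comm (s * d r)] at h
  exact (add_right_cancel h).symm

theorem commute_mul_mul_map_self (d : R →+ R) (hd : ∀ x y, d (x * y) = d x * y + x * d y) {a : R}
    (h : ∀ y, a * d y ∈ center R) (y r : R) : Commute (a * (y * d r)) r := by
  have hyr : Commute (a * d (y * r)) r := (commute_of_mem_center_s11 (h _) r).symm
  have hy : Commute (a * d y * r) r := (commute_of_mem_center_s11 (h y) r).symm.mul_left (.refl r)
  convert hyr.sub_left hy using 1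
  rw [hd]
  noncomm_ring

theorem mul_map_eq_zero_or_mem_center
    (hprime : ∀ a b : R, (∀ r : R, a * r * b = 0) → a = 0 ∨ b = 0)
    (d : R →+ R) (hd : ∀ x y, d (x * y) = d x * y + x * d y) {a : R}
    (h : ∀ y, a * d y ∈ center R) (r : R) : a * d r = 0 ∨ r ∈ center R := by
  refine or_iff_not_imp_left.mpr fun hc => ?_
  have hreg := isLeftRegular_of_mem_center_of_ne_zero hprime (h r) hc
  refine mem_center_of_forall_commute_mul_right hprime (b := d r)
    (fun hdr => hc (by rw [hdr, mul_zero])) fun y => hreg ?_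
  show a * d r * (y * d r * r) = a * d r * (r * (y * d r))
  calc a * d r * (y * d r * r) = a * (d r * y * d r) * r := by noncomm_ring
    _ = r * (a * (d r * y * d r)) := (commute_mul_mul_map_self d hd h (d r * y) r).eq
    _ = r * (a * d r) * (y * d r) := by noncomm_ring
    _ = a * d r * (r * (y * d r)) := by rw [mem_center_iff.mp (h r), mul_assoc]

theorem eq_zero_of_forall_mul_map_eq_zero
    (hprime : ∀ a b : R, (∀ r : R, a * r * b = 0) → a = 0 ∨ b = 0)
    (d : R →+ R) (hd : ∀ x y, d (x * y) = d x * y + x * d y) (hd0 : d ≠ 0) {a : R}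
    (h : ∀ r, a * d r = 0) : a = 0 := by
  obtain ⟨y, hy⟩ := DFunLike.ne_iff.mp hd0
  refine (hprime a (d y) fun x => ?_).resolve_right hy
  have hxy := h (x * y)
  rwa [hd, mul_add, ← mul_assoc, h x, zero_mul, zero_add, ← mul_assoc] at hxy

theorem mul_comm_of_mul_map_mem_center
    (hprime : ∀ a b : R, (∀ r : R, a * r * b = 0) → a = 0 ∨ b = 0)
    (d : R →+ R) (hd : ∀ x y, d (x * y) = d x * y + x * d y) (hd0 : d ≠ 0) {a : R} (ha : a ≠ 0)
    (h : ∀ y, a * d y ∈ center R) (u v : R) : u * v = v * u := by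
  have hcover : ((⊤ : AddSubgroup R) : Set R) ⊆
      ((AddMonoidHom.mulLeft a).comp d).ker ∪ (center R).toAddSubgroup :=
    fun r _ => mul_map_eq_zero_or_mem_center hprime d hd h r
  rcases AddSubgroupClass.subset_union.mp hcover with hker | hcenter
  · exact absurd (eq_zero_of_forall_mul_map_eq_zero hprime d hd hd0 fun r => hker trivial) ha
  · exact (mem_center_iff.mp (hcenter (AddSubgroup.mem_top u)) v).symm

end

section
variable {R : Type*} [Ring R] [StarRing R]

theorem star_mul_of_mem_center_of_star_eq_neg {s : R} (hs : s ∈ center R) (hss : star s = -s)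
    (y : R) : star (s * y) = -(s * star y) := by
  rw [star_mul, hss, mul_neg, mem_center_iff.mp hs]

theorem mul_map_star_mul_of_star_eq_neg (d : R →+ R) (hd : ∀ x y, d (x * y) = d x * y + x * d y)
    {s : R} (hs : s ∈ center R) (hss : star s = -s) (a y : R) :
    a * d (star (s * y)) = -(d s * (a * star y)) - s * (a * d (star y)) := by
  have hds := map_mem_center_of_leibniz d hd hs
  rw [star_mul_of_mem_center_of_star_eq_neg hs hss, map_neg, hd, mul_neg, mul_add,
    (commute_of_mem_center_s11 hds a).left_comm, (commute_of_mem_center_s11 hs a).left_comm]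
  abel

theorem add_mul_map_star_mem_center (d₁ d₂ : R →+ R) (h : ∀ x, d₁ x * d₂ (star x) ∈ center R)
    (x y : R) : d₁ x * d₂ (star y) + d₁ y * d₂ (star x) ∈ center R := by
  convert sub_mem (sub_mem (h (x + y)) (h x)) (h y) using 1
  rw [star_add, map_add, map_add]
  noncomm_ring

theorem mul_map_star_mem_center_of_add_mem_center
    (hprime : ∀ a b : R, (∀ r : R, a * r * b = 0) → a = 0 ∨ b = 0)
    (h2tor : ∀ a : R, 2 * a = 0 → a = 0)
    (d₁ d₂ : R →+ R) (hd₁ : ∀ x y, d₁ (x * y) = d₁ x * y + x * d₁ y)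
    (hd₂ : ∀ x y, d₂ (x * y) = d₂ x * y + x * d₂ y)
    {s : R} (hs : s ∈ center R) (hss : star s = -s) (hs0 : s ≠ 0) {a b : R}
    (h : ∀ y, a * d₂ (star y) + d₁ y * b ∈ center R) (y : R) : a * d₂ (star y) ∈ center R := by
  have hsreg := isLeftRegular_of_mem_center_of_ne_zero hprime hs hs0
  have h2reg : IsLeftRegular (2 : R) := isLeftRegular_iff_right_eq_zero_of_mul.mpr h2tor
  -- The terms `T y = a d₂(y*)`, `N y = d₂(s) a y*`, `L y = d₁(s) y b` under `y ↦ s y`.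
  have hT := mul_map_star_mul_of_star_eq_neg d₂ hd₂ hs hss a
  have hN : ∀ y, d₂ s * (a * star (s * y)) = -(s * (d₂ s * (a * star y))) := fun y => by
    rw [star_mul_of_mem_center_of_star_eq_neg hs hss, mul_neg, mul_neg,
      (commute_of_mem_center_s11 hs a).left_comm, (commute_of_mem_center_s11 hs _).left_comm]
  have hL : ∀ y, d₁ s * (s * y * b) = s * (d₁ s * (y * b)) := fun y => by
    rw [mul_assoc, (commute_of_mem_center_s11 hs _).left_comm]
  have hD : ∀ y, 2 * (s * (a * d₂ (star y))) + d₂ s * (a * star y) - d₁ s * (y * b) ∈ center R :=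
    fun y => by
      have key := sub_mem (mul_mem hs (h y)) (h (s * y))
      rw [hT, hd₁] at key
      convert key using 1
      noncomm_ring
  have hF : ∀ y, s * (a * d₂ (star y)) + d₂ s * (a * star y) ∈ center R := fun y => by
    have key := sub_mem (mul_mem hs (hD y)) (hD (s * y))
    rw [hT, hN, hL] at key
    refine mem_center_of_mul_mem_center (mul_mem (mul_mem (ofNat_mem _ 2) (ofNat_mem _ 2)) hs)
      ((h2reg.mul h2reg).mul hsreg) ?_
    convert key using 1
    noncomm_ring
  have hNcenter : ∀ y, d₂ s * (a * star y) ∈ center R := fun y => by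
    have key := add_mem (mul_mem hs (hF y)) (hF (s * y))
    rw [hT, hN] at key
    refine mem_center_of_mul_mem_center hs hsreg (neg_mem_iff.mp ?_)
    convert key using 1
    noncomm_ring
  refine mem_center_of_mul_mem_center hs hsreg ?_
  convert sub_mem (hF y) (hNcenter y) using 1
  abel

end

/-- Corollary 8.
Let `R` be a 2-torsion free prime ring with involution `*` of the second kind, and let
`d₁, d₂` be nonzero derivations of `R`.  Then `d₁(x)d₂(x*) ∈ Z(R)` for all `x ∈ R` if
and only if `R` is an integral domain. -/
theorem statement11 {R : Type*} [Ring R] [StarRing R]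
    (hprime : ∀ a b : R, (∀ r : R, a * r * b = 0) → a = 0 ∨ b = 0)
    (h2tor : ∀ a : R, 2 * a = 0 → a = 0)
    (hsecond : ∃ s : R, (∀ r : R, s * r = r * s) ∧ star s = -s ∧ s ≠ 0)
    (d₁ d₂ : R → R)
    (hd₁_add : ∀ x y : R, d₁ (x + y) = d₁ x + d₁ y)
    (hd₁_mul : ∀ x y : R, d₁ (x * y) = d₁ x * y + x * d₁ y)
    (hd₂_add : ∀ x y : R, d₂ (x + y) = d₂ x + d₂ y)
    (hd₂_mul : ∀ x y : R, d₂ (x * y) = d₂ x * y + x * d₂ y)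
    (hd₁_ne : ∃ x : R, d₁ x ≠ 0) (hd₂_ne : ∃ x : R, d₂ x ≠ 0) :
    (∀ x r : R, (d₁ x * d₂ (star x)) * r = r * (d₁ x * d₂ (star x)))
      ↔ ((0 : R) ≠ 1 ∧ (∀ a b : R, a * b = b * a) ∧
          (∀ a b : R, a * b = 0 → a = 0 ∨ b = 0)) := by
  refine ⟨fun hH => ?_, fun ⟨_, hcomm, _⟩ x r => hcomm _ _⟩
  obtain ⟨s, hs, hss, hs0⟩ := hsecond
  obtain ⟨x₀, hx₀⟩ := hd₁_ne
  let D₁ := AddMonoidHom.mk' d₁ hd₁_add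
  let D₂ := AddMonoidHom.mk' d₂ hd₂_add
  have hcenter : ∀ x y, D₁ x * D₂ y ∈ center R := fun x y => by
    simpa only [star_star] using mul_map_star_mem_center_of_add_mem_center hprime h2tor D₁ D₂
      hd₁_mul hd₂_mul (mem_center_iff.mpr fun r => (hs r).symm) hss hs0
      (add_mul_map_star_mem_center D₁ D₂ (fun x => mem_center_iff.mpr fun r => (hH x r).symm) x)
      (star y)
  have hcomm := mul_comm_of_mul_map_mem_center hprime D₂ hd₂_mul (DFunLike.ne_iff.mpr hd₂_ne) hx₀
    (hcenter x₀)
  refine ⟨fun h01 => hx₀ ?_, hcomm, fun a b hab => hprime a b fun r => ?_⟩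
  · rw [← mul_one (d₁ x₀), ← h01, mul_zero]
  · rw [mul_assoc, hcomm r b, ← mul_assoc, hab, zero_mul]
end

section
/- Let R be an associative ring with involution *, let P be a prime ideal of R such that R/P has characteristic different from 2, and suppose * is of P-second kind (Z(R) ∩ S(R) is not contained in P). If d is a derivation of R, then the following are equivalent: (1) the image of d(x)d(x*) + [x, x*] lies in Z(R/P) for all x ∈ R; (2) the image of d(x)d(x*) + x ∘ x* lies in Z(R/P) for all x ∈ R; (3) R/P is an integral domain. The same equivalence holds with the + signs in (1) and (2) replaced by − signs. -/
/-!
Auxiliary machinery for Statement 13.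
`NN P a` says that `a` is central modulo the two-sided ideal `P`.
-/

namespace S13

variable {R : Type*} [Ring R] (P : TwoSidedIdeal R)

/-- `a` is central modulo `P`. -/
def NN (a : R) : Prop := ∀ r : R, a * r - r * a ∈ P

variable {P}

lemma NN_intro {a : R} (h : ∀ r : R, a * r - r * a ∈ P) : NN P a := h

lemma NN_of_mem {a : R} (h : a ∈ P) : NN P a := fun r =>
  P.sub_mem (P.mul_mem_right _ _ h) (P.mul_mem_left _ _ h)

lemma NN.add {a b : R} (ha : NN P a) (hb : NN P b) : NN P (a + b) := fun r => by
  have := P.add_mem (ha r) (hb r)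
  have e : a * r - r * a + (b * r - r * b) = (a + b) * r - r * (a + b) := by noncomm_ring
  rwa [e] at this

lemma NN.neg {a : R} (ha : NN P a) : NN P (-a) := fun r => by
  have := P.neg_mem (ha r)
  have e : -(a * r - r * a) = -a * r - r * -a := by noncomm_ring
  rwa [e] at this

lemma NN.sub {a b : R} (ha : NN P a) (hb : NN P b) : NN P (a - b) := by
  have := ha.add hb.neg
  have e : a + -b = a - b := by noncomm_ring
  rwa [e] at this

lemma NN.mul {a b : R} (ha : NN P a) (hb : NN P b) : NN P (a * b) := fun r => by
  have := P.add_mem (P.mul_mem_left a _ (hb r)) (P.mul_mem_right _ b (ha r))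
  have e : a * (b * r - r * b) + (a * r - r * a) * b = a * b * r - r * (a * b) := by noncomm_ring
  rwa [e] at this

lemma NN_congr {a b : R} (e : a = b) (h : NN P a) : NN P b := e ▸ h

lemma central_move {c : R} (hc : ∀ r : R, c * r = r * c) (a b : R) :
    a * (c * b) = c * (a * b) := by rw [← mul_assoc, ← hc, mul_assoc]

lemma NN.cmul {c a : R} (hc : ∀ r : R, c * r = r * c) (ha : NN P a) : NN P (c * a) := fun r => by
  have := P.mul_mem_left c _ (ha r)
  have e : c * (a * r - r * a) = c * a * r - r * (c * a) := by
    rw [show r * (c * a) = c * (r * a) from central_move hc r a]; noncomm_ring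
  rwa [e] at this

section Prime
variable (hprime : ∀ a b : R, (∀ r : R, a * r * b ∈ P) → a ∈ P ∨ b ∈ P)
include hprime

lemma cancelP {c w : R} (hc : ∀ r : R, c * r = r * c) (hcP : c ∉ P) (h : c * w ∈ P) : w ∈ P := by
  rcases hprime c w (fun r => by
    have e : c * r * w = r * (c * w) := by rw [hc r, mul_assoc]
    rw [e]; exact P.mul_mem_left _ _ h) with h' | h'
  · exact absurd h' hcP
  · exact h'

lemma cancelN {c w : R} (hc : ∀ r : R, c * r = r * c) (hcP : c ∉ P) (h : NN P (c * w)) :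
    NN P w := by
  intro r
  have h1 := h r
  have e : c * w * r - r * (c * w) = c * (w * r - r * w) := by
    rw [show r * (c * w) = c * (r * w) from central_move hc r w]; noncomm_ring
  rw [e] at h1
  exact cancelP hprime hc hcP h1

lemma sq_mem {a : R} (hN : NN P a) (hsq : a * a ∈ P) : a ∈ P := by
  rcases hprime a a (fun r => by
    have e : a * r * a = a * (r * a - a * r) + a * a * r := by noncomm_ring
    rw [e]
    exact P.add_mem (P.mul_mem_left _ _ (by
      have := P.neg_mem (hN r); rwa [neg_sub] at this)) (P.mul_mem_right _ _ hsq))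
      with h | h <;> exact h

lemma comm_of_NNall (h : ∀ x y : R, NN P (x * y - y * x)) :
    ∀ x y : R, x * y - y * x ∈ P := by
  intro y u
  have h1 : NN P (y * (y * u - u * y)) := by
    refine NN_congr ?_ (h y (y * u))
    noncomm_ring
  have h2 : (y * u - u * y) * (y * u - u * y) ∈ P := by
    have i1 := h1 u
    have i2 : y * ((y * u - u * y) * u - u * (y * u - u * y)) ∈ P := P.mul_mem_left _ _ (h y u u)
    have e : (y * u - u * y) * (y * u - u * y) =
        (y * (y * u - u * y) * u - u * (y * (y * u - u * y))) -
          y * ((y * u - u * y) * u - u * (y * u - u * y)) := by noncomm_ring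
    rw [e]; exact P.sub_mem i1 i2
  exact sq_mem hprime (h y u) h2

lemma primeQuot (hcomm : ∀ x y : R, x * y - y * x ∈ P) :
    ∀ x y : R, x * y ∈ P → x ∈ P ∨ y ∈ P := by
  intro x y hxy
  refine hprime x y (fun r => ?_)
  have h1 : x * y * r ∈ P := P.mul_mem_right _ _ hxy
  have h2 : x * (y * r - r * y) ∈ P := P.mul_mem_left _ _ (hcomm y r)
  have e : x * r * y = x * y * r - x * (y * r - r * y) := by noncomm_ring
  rw [e]; exact P.sub_mem h1 h2

end Prime

section D
variable {d : R → R} (hd_add : ∀ x y : R, d (x + y) = d x + d y)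
    (hd_mul : ∀ x y : R, d (x * y) = d x * y + x * d y)

include hd_add in
lemma d_zero' : d 0 = 0 := by
  have h := hd_add 0 0
  rw [add_zero] at h
  have h2 : d 0 + 0 = d 0 + d 0 := by rw [add_zero]; exact h
  exact (add_left_cancel h2).symm

include hd_add in
lemma d_neg' (x : R) : d (-x) = -d x := by
  have h := hd_add x (-x)
  rw [add_neg_cancel, d_zero' hd_add] at h
  exact (neg_eq_of_add_eq_zero_right h.symm).symm

include hd_mul in
lemma d_one' : d 1 = 0 := by
  have h := hd_mul 1 1
  rw [mul_one, one_mul, mul_one] at h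
  have h2 : d 1 + 0 = d 1 + d 1 := by rw [add_zero]; exact h
  exact (add_left_cancel h2).symm

end D


/-- The key "classical" lemma: if `d(x)d(y) + η[x,y]` is central mod `P` for all `x,y`,
then `R/P` is commutative. -/
lemma CI (hprime : ∀ a b : R, (∀ r : R, a * r * b ∈ P) → a ∈ P ∨ b ∈ P)
    {d : R → R}
    (hd_mul : ∀ x y : R, d (x * y) = d x * y + x * d y)
    {η : R} (hηc : ∀ r : R, η * r = r * η) (hη2 : η * η = 1)
    (T : ∀ x y : R, NN P (d x * d y + η * (x * y - y * x))) :
    ∀ x y : R, x * y - y * x ∈ P := by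
  -- helper to strip a central η
  have eta_cancel : ∀ {a : R}, NN P (η * a) → NN P a := by
    intro a h
    have h2 := h.cmul hηc
    exact NN_congr (by rw [← mul_assoc, hη2, one_mul]) h2
  refine comm_of_NNall hprime ?_
  by_cases hD : ∀ w : R, d w ∈ P
  · intro x y
    have h1 : d x * d y ∈ P := P.mul_mem_right _ _ (hD x)
    have h2 := (T x y).sub (NN_of_mem h1)
    exact eta_cancel (NN_congr (by noncomm_ring) h2)
  · push_neg at hD
    obtain ⟨w₀, hw₀⟩ := hD
    intro x y₀
    -- we show `NN P (x*z - z*x)` for all `z`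
    suffices hgoal : ∀ z : R, NN P (x * z - z * x) from hgoal y₀
    have hAA : NN P (d x * d x) := NN_congr (show _ = d x * d x by noncomm_ring) (T x x)
    have hC1 : ∀ z : R, NN P ((d x * d z + η * (x * z - z * x)) * x + d x * z * d x) := by
      intro z
      refine NN_congr ?_ (T x (z * x))
      rw [hd_mul]
      noncomm_ring
    -- the contradiction block used when all `T x z ∈ P` but `d x ∉ P, (d x)^2 ∈ P`
    have contra : (∀ z : R, d x * d z + η * (x * z - z * x) ∈ P) →
        d x ∉ P → d x * d x ∈ P → False := by
      intro hTP hA hA2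
      have step1 : ∀ z w : R, (d x * z - z * d x) * d w ∈ P := by
        intro z w
        have i1 := hTP (z * w)
        rw [hd_mul] at i1
        have i2 : (d x * d z + η * (x * z - z * x)) * w ∈ P := P.mul_mem_right _ _ (hTP z)
        have i3 : z * (d x * d w + η * (x * w - w * x)) ∈ P := P.mul_mem_left _ _ (hTP w)
        have hm : z * (η * (x * w - w * x)) = η * (z * (x * w - w * x)) :=
          central_move hηc z _
        have e : (d x * z - z * d x) * d w =
            (d x * (d z * w + z * d w) + η * (x * (z * w) - z * w * x))
            - (d x * d z + η * (x * z - z * x)) * w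
            - z * (d x * d w + η * (x * w - w * x)) := by
          rw [mul_add, mul_add, mul_sub, hm]
          noncomm_ring
        rw [e]
        exact P.sub_mem (P.sub_mem i1 i2) i3
      have step2 : ∀ z v w : R, (d x * z - z * d x) * v * d w ∈ P := by
        intro z v w
        have i1 := step1 (z * v) w
        have i2 : z * ((d x * v - v * d x) * d w) ∈ P := P.mul_mem_left _ _ (step1 v w)
        have e : (d x * z - z * d x) * v * d w =
            (d x * (z * v) - z * v * d x) * d w - z * ((d x * v - v * d x) * d w) := by
          noncomm_ring
        rw [e]; exact P.sub_mem i1 i2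
      have hNA : NN P (d x) := by
        intro r
        rcases hprime (d x * r - r * d x) (d w₀) (fun v => step2 r v w₀) with h | h
        · exact h
        · exact absurd h hw₀
      exact hA (sq_mem hprime hNA hA2)
    by_cases hA2 : d x * d x ∈ P
    · by_cases hA : d x ∈ P
      · intro z
        have h1 : d x * d z ∈ P := P.mul_mem_right _ _ hA
        exact eta_cancel (NN_congr (by noncomm_ring) ((T x z).sub (NN_of_mem h1)))
      · -- A ∉ P, A² ∈ P
        have hM5 : ∀ z : R, (d x * d z + η * (x * z - z * x)) * (x * d x - d x * x) ∈ P := by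
          intro z
          have h1 := hC1 z (d x)
          have e2 : ((d x * d z + η * (x * z - z * x)) * d x
              - d x * (d x * d z + η * (x * z - z * x))) * x ∈ P :=
            P.mul_mem_right _ _ (T x z (d x))
          have e3 : d x * z * (d x * d x) ∈ P := P.mul_mem_left _ _ hA2
          have e4 : (d x * d x) * (z * d x) ∈ P := P.mul_mem_right _ _ hA2
          have e : (d x * d z + η * (x * z - z * x)) * (x * d x - d x * x) =
              (((d x * d z + η * (x * z - z * x)) * x + d x * z * d x) * d x
                - d x * (((d x * d z + η * (x * z - z * x)) * x + d x * z * d x)))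
              - ((d x * d z + η * (x * z - z * x)) * d x
                  - d x * (d x * d z + η * (x * z - z * x))) * x
              - d x * z * (d x * d x) + (d x * d x) * (z * d x) := by noncomm_ring
          rw [e]
          exact P.add_mem (P.sub_mem (P.sub_mem h1 e2) e3) e4
        by_cases hxA : x * d x - d x * x ∈ P
        · -- (E1)
          have hE1 : ∀ r z : R, (x * r - r * x) * (d x * d z + η * (x * z - z * x)) ∈ P := by
            intro r z
            have hN1 := T x (x * z)
            rw [hd_mul] at hN1
            have hm : x * (η * (x * z - z * x)) = η * (x * (x * z - z * x)) :=
              central_move hηc x _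
            have hN1' : NN P (d x * (d x * z + x * d z) + x * (η * (x * z - z * x))) := by
              refine NN_congr ?_ hN1
              rw [hm]; noncomm_ring
            have i1 := hN1' r
            have i2 : x * ((d x * d z + η * (x * z - z * x)) * r
                - r * (d x * d z + η * (x * z - z * x))) ∈ P := P.mul_mem_left _ _ (T x z r)
            have i3 := (NN_of_mem (P.mul_mem_right (d x * d x) z hA2) : NN P (d x * d x * z)) r
            have hxA' : d x * x - x * d x ∈ P := by
              have := P.neg_mem hxA; rwa [neg_sub] at this
            have i4 := (NN_of_mem (P.mul_mem_right _ (d z) hxA') :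
              NN P ((d x * x - x * d x) * d z)) r
            have e : (x * r - r * x) * (d x * d z + η * (x * z - z * x)) =
                ((d x * (d x * z + x * d z) + x * (η * (x * z - z * x))) * r
                  - r * (d x * (d x * z + x * d z) + x * (η * (x * z - z * x))))
                - x * ((d x * d z + η * (x * z - z * x)) * r
                  - r * (d x * d z + η * (x * z - z * x)))
                - (d x * d x * z * r - r * (d x * d x * z))
                - ((d x * x - x * d x) * d z * r - r * ((d x * x - x * d x) * d z)) := by
              noncomm_ring
            rw [e]
            exact P.sub_mem (P.sub_mem (P.sub_mem i1 i2) i3) i4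
          by_cases hxall : ∀ r : R, x * r - r * x ∈ P
          · exact fun z => NN_of_mem (hxall z)
          · push_neg at hxall
            obtain ⟨r₀, hr₀⟩ := hxall
            have hTP : ∀ z : R, d x * d z + η * (x * z - z * x) ∈ P := by
              intro z
              rcases hprime (x * r₀ - r₀ * x) (d x * d z + η * (x * z - z * x))
                (fun w => by
                  have i1 : (x * r₀ - r₀ * x) * ((w * (d x * d z + η * (x * z - z * x)))
                      - (d x * d z + η * (x * z - z * x)) * w) ∈ P :=
                    P.mul_mem_left _ _ (by
                      have := P.neg_mem (T x z w); rwa [neg_sub] at this)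
                  have i2 : ((x * r₀ - r₀ * x) * (d x * d z + η * (x * z - z * x))) * w ∈ P :=
                    P.mul_mem_right _ _ (hE1 r₀ z)
                  have e : (x * r₀ - r₀ * x) * w * (d x * d z + η * (x * z - z * x)) =
                      (x * r₀ - r₀ * x) * ((w * (d x * d z + η * (x * z - z * x)))
                        - (d x * d z + η * (x * z - z * x)) * w)
                      + ((x * r₀ - r₀ * x) * (d x * d z + η * (x * z - z * x))) * w := by
                    noncomm_ring
                  rw [e]; exact P.add_mem i1 i2) with h | h
              · exact absurd h hr₀
              · exact h
            exact absurd (contra hTP hA hA2) (fun h => h.elim)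
        · -- hxA fails: all T x z ∈ P, contradiction
          have hTP : ∀ z : R, d x * d z + η * (x * z - z * x) ∈ P := by
            intro z
            rcases hprime (d x * d z + η * (x * z - z * x)) (x * d x - d x * x)
              (fun w => by
                have i1 : ((d x * d z + η * (x * z - z * x)) * w
                    - w * (d x * d z + η * (x * z - z * x))) * (x * d x - d x * x) ∈ P :=
                  P.mul_mem_right _ _ (T x z w)
                have i2 : w * ((d x * d z + η * (x * z - z * x)) * (x * d x - d x * x)) ∈ P :=
                  P.mul_mem_left _ _ (hM5 z)
                have e : (d x * d z + η * (x * z - z * x)) * w * (x * d x - d x * x) =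
                    ((d x * d z + η * (x * z - z * x)) * w
                      - w * (d x * d z + η * (x * z - z * x))) * (x * d x - d x * x)
                    + w * ((d x * d z + η * (x * z - z * x)) * (x * d x - d x * x)) := by
                  noncomm_ring
                rw [e]; exact P.add_mem i1 i2) with h | h
            · exact h
            · exact absurd h hxA
          exact absurd (contra hTP hA hA2) (fun h => h.elim)
    · -- Branch 1 : A² ∉ P
      have hW : ∀ z : R, (d x * z * d x) * x - x * (d x * z * d x) ∈ P := by
        intro z
        have h1 := hC1 z x
        have h2 : ((d x * d z + η * (x * z - z * x)) * x
            - x * (d x * d z + η * (x * z - z * x))) * x ∈ P :=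
          P.mul_mem_right _ _ (T x z x)
        have e : (d x * z * d x) * x - x * (d x * z * d x) =
            (((d x * d z + η * (x * z - z * x)) * x + d x * z * d x) * x
              - x * ((d x * d z + η * (x * z - z * x)) * x + d x * z * d x))
            - ((d x * d z + η * (x * z - z * x)) * x
              - x * (d x * d z + η * (x * z - z * x))) * x := by noncomm_ring
        rw [e]; exact P.sub_mem h1 h2
      have hCc : ∀ z : R, (d x * z * x - x * (d x * z)) * (d x * d x) ∈ P := by
        intro z
        have h1 := hW (z * d x)
        have h2 : d x * z * ((d x * d x) * x - x * (d x * d x)) ∈ P :=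
          P.mul_mem_left _ _ (hAA x)
        have e : (d x * z * x - x * (d x * z)) * (d x * d x) =
            ((d x * (z * d x) * d x) * x - x * (d x * (z * d x) * d x))
            - d x * z * ((d x * d x) * x - x * (d x * d x)) := by noncomm_ring
        rw [e]; exact P.sub_mem h1 h2
      have hD1 : ∀ z : R, d x * z * x - x * (d x * z) ∈ P := by
        intro z
        rcases hprime (d x * z * x - x * (d x * z)) (d x * d x)
          (fun w => by
            have i1 : (d x * z * x - x * (d x * z)) * (w * (d x * d x) - (d x * d x) * w) ∈ P :=
              P.mul_mem_left _ _ (by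
                have := P.neg_mem (hAA w); rwa [neg_sub] at this)
            have i2 : ((d x * z * x - x * (d x * z)) * (d x * d x)) * w ∈ P :=
              P.mul_mem_right _ _ (hCc z)
            have e : (d x * z * x - x * (d x * z)) * w * (d x * d x) =
                (d x * z * x - x * (d x * z)) * (w * (d x * d x) - (d x * d x) * w)
                + ((d x * z * x - x * (d x * z)) * (d x * d x)) * w := by noncomm_ring
            rw [e]; exact P.add_mem i1 i2) with h | h
        · exact h
        · exact absurd h hA2
      have hAx : d x * x - x * d x ∈ P := by
        have h := hD1 1
        rwa [mul_one] at h
      have hE : ∀ z : R, d x * (x * z - z * x) ∈ P := by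
        intro z
        have h1 := hD1 z
        have h2 : (d x * x - x * d x) * z ∈ P := P.mul_mem_right _ _ hAx
        have e : d x * (x * z - z * x) = (d x * x - x * d x) * z - (d x * z * x - x * (d x * z)) := by
          noncomm_ring
        rw [e]; exact P.sub_mem h2 h1
      have hE2 : ∀ z w : R, d x * z * (x * w - w * x) ∈ P := by
        intro z w
        have h1 := hE (z * w)
        have h2 : (d x * (x * z - z * x)) * w ∈ P := P.mul_mem_right _ _ (hE z)
        have e : d x * z * (x * w - w * x) =
            d x * (x * (z * w) - z * w * x) - (d x * (x * z - z * x)) * w := by noncomm_ring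
        rw [e]; exact P.sub_mem h1 h2
      intro z
      rcases hprime (d x) (x * z - z * x) (fun w => hE2 w z) with h | h
      · exact absurd (P.mul_mem_right _ _ h) hA2
      · exact NN_of_mem h

lemma pipeline [StarRing R]
    (hprime : ∀ a b : R, (∀ r : R, a * r * b ∈ P) → a ∈ P ∨ b ∈ P)
    (h2 : (2 : R) ∉ P)
    {s : R} (hs_c : ∀ r : R, s * r = r * s) (hs_star : star s = -s) (hsP : s ∉ P)
    {d : R → R} (hd_add : ∀ x y : R, d (x + y) = d x + d y)
    (hd_mul : ∀ x y : R, d (x * y) = d x * y + x * d y)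
    (b : R → R → R)
    (hb_addl : ∀ u v w : R, b (u + v) w = b u w + b v w)
    (hb_addr : ∀ u v w : R, b u (v + w) = b u v + b u w)
    (hb_negr : ∀ u w : R, b u (-w) = -b u w)
    (hb_sl : ∀ u w : R, b (s * u) w = s * b u w)
    (hb_sr : ∀ u w : R, b u (s * w) = s * b u w)
    (hyp : ∀ x : R, NN P (d x * d (star x) + b x (star x))) :
    (∀ z u : R, NN P (b z u)) ∨ (∀ z u : R, NN P (d z * d u + b z u)) := by
  have two_c : ∀ r : R, 2 * r = r * 2 := fun r => by rw [two_mul, mul_two]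
  have smove : ∀ a c : R, a * (s * c) = s * (a * c) := central_move hs_c
  have stail : ∀ a : R, a * s = s * a := fun a => (hs_c a).symm
  have hds_c : ∀ w : R, d s * w = w * d s := by
    intro w
    have h := congrArg d (hs_c w)
    rw [hd_mul, hd_mul, hs_c (d w)] at h
    rw [add_comm (d w * s) (w * d s)] at h
    exact add_right_cancel h
  have dmove : ∀ a c : R, a * (d s * c) = d s * (a * c) := central_move hds_c
  have dtail : ∀ a : R, a * d s = d s * a := fun a => (hds_c a).symm
  have star_s_mul : ∀ z : R, star (s * z) = -(s * star z) := by
    intro z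
    rw [star_mul, hs_star, mul_neg, ← hs_c]
  have Gmem : ∀ x y : R,
      NN P (d x * d (star y) + d y * d (star x) + (b x (star y) + b y (star x))) := by
    intro x y
    refine NN_congr ?_ (((hyp (x + y)).sub (hyp x)).sub (hyp y))
    simp only [star_add, hd_add, hb_addl, hb_addr]
    noncomm_ring
  have Wmem : ∀ x z : R,
      NN P (d s * (z * d (star x) - d x * star z)
        + 2 * (s * (d z * d (star x) + b z (star x)))) := by
    intro x z
    refine NN_congr ?_ ((Gmem x (s * z)).add ((Gmem x z).cmul hs_c))
    simp only [star_s_mul, d_neg' hd_add, hd_mul, hb_negr, hb_sr, hb_sl]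
    try simp only [mul_assoc, mul_add, add_mul, mul_sub, sub_mul, mul_neg, neg_mul, smove, stail]
    try simp only [mul_assoc, mul_add, add_mul, mul_sub, sub_mul, mul_neg, neg_mul, dmove, dtail]
    noncomm_ring
  have Dmem : ∀ x z : R, NN P (d s * (z * d (star x) + d x * star z)) := by
    intro x z
    have h3 := (Wmem x (s * z)).sub ((Wmem x z).cmul hs_c)
    have h4 : NN P (s * (2 * (d s * (z * d (star x) + d x * star z)))) := by
      refine NN_congr ?_ h3
      simp only [star_s_mul, d_neg' hd_add, hd_mul, hb_negr, hb_sr, hb_sl]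
      try simp only [mul_assoc, mul_add, add_mul, mul_sub, sub_mul, mul_neg, neg_mul, smove, stail]
      try simp only [mul_assoc, mul_add, add_mul, mul_sub, sub_mul, mul_neg, neg_mul, dmove, dtail]
      noncomm_ring
    exact cancelN hprime two_c h2 (cancelN hprime hs_c hsP h4)
  by_cases hds : d s ∈ P
  · right
    intro z u
    have h := (Wmem (star u) z).sub
      (NN_of_mem (P.mul_mem_right _ _ hds :
        d s * (z * d (star (star u)) - d (star u) * star z) ∈ P))
    have h' : NN P (2 * (s * (d z * d (star (star u)) + b z (star (star u))))) :=
      NN_congr (by noncomm_ring) h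
    have h'' := cancelN hprime hs_c hsP (cancelN hprime two_c h2 h')
    exact NN_congr (by rw [star_star]) h''
  · left
    have U : ∀ x z : R, NN P (z * d (star x) + d x * star z) :=
      fun x z => cancelN hprime hds_c hds (Dmem x z)
    have U1 : ∀ x : R, NN P (d (star x) + d x) := by
      intro x
      refine NN_congr ?_ (U x 1)
      rw [star_one, one_mul, mul_one]
    have U2 : ∀ x : R, NN P (d (star x) - d x) := by
      intro x
      refine cancelN hprime hs_c hsP (NN_congr ?_ (U x s))
      rw [hs_star, show d x * -s = -(s * d x) by rw [mul_neg, ← hs_c]]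
      noncomm_ring
    have Cd : ∀ x : R, NN P (d x) := by
      intro x
      have h := (U1 x).sub (U2 x)
      have h' : NN P (2 * d x) := NN_congr (by noncomm_ring) h
      exact cancelN hprime two_c h2 h'
    have hbx : ∀ x : R, NN P (b x (star x)) := by
      intro x
      refine NN_congr ?_ ((hyp x).sub ((Cd x).mul (Cd (star x))))
      noncomm_ring
    have hlin : ∀ x y : R, NN P (b x (star y) + b y (star x)) := by
      intro x y
      refine NN_congr ?_ (((hbx (x + y)).sub (hbx x)).sub (hbx y))
      simp only [star_add, hb_addl, hb_addr]
      noncomm_ring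
    have hV : ∀ x z : R, NN P (b z (star x) - b x (star z)) := by
      intro x z
      refine cancelN hprime hs_c hsP (NN_congr ?_ (hlin x (s * z)))
      simp only [star_s_mul, hb_negr, hb_sr, hb_sl]
      noncomm_ring
    intro z u
    have h := (hV (star u) z).add (hlin (star u) z)
    have h' : NN P (2 * b z (star (star u))) := NN_congr (by noncomm_ring) h
    have h'' := cancelN hprime two_c h2 h'
    exact NN_congr (by rw [star_star]) h''


section Endgames
variable [StarRing R]
variable (hprime : ∀ a b : R, (∀ r : R, a * r * b ∈ P) → a ∈ P ∨ b ∈ P)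
variable (hchar : (2 : R) ∉ P)
variable {s : R} (hs_c : ∀ r : R, s * r = r * s) (hs_star : star s = -s) (hsP : s ∉ P)
variable {d : R → R} (hd_add : ∀ x y : R, d (x + y) = d x + d y)
    (hd_mul : ∀ x y : R, d (x * y) = d x * y + x * d y)

include hprime hchar hs_c hs_star hsP hd_add hd_mul

lemma comm_of_pc
    (hyp : ∀ x : R, NN P (d x * d (star x) + (x * star x - star x * x))) :
    ∀ x y : R, x * y - y * x ∈ P := by
  have smove : ∀ a c : R, a * (s * c) = s * (a * c) := central_move hs_c
  rcases pipeline hprime hchar hs_c hs_star hsP hd_add hd_mul (fun u w => u * w - w * u)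
      (fun u v w => by noncomm_ring) (fun u v w => by noncomm_ring)
      (fun u w => by noncomm_ring)
      (fun u w => by
        show s * u * w - w * (s * u) = s * (u * w - w * u)
        rw [show w * (s * u) = s * (w * u) from smove w u, mul_assoc]; noncomm_ring)
      (fun u w => by
        show u * (s * w) - s * w * u = s * (u * w - w * u)
        rw [smove u w, mul_assoc]; noncomm_ring)
      hyp with h | h
  · exact comm_of_NNall hprime h
  · exact CI hprime hd_mul (η := 1) (fun r => by rw [one_mul, mul_one]) (by rw [one_mul])
      (fun x y => NN_congr (by noncomm_ring) (h x y))

lemma comm_of_mc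
    (hyp : ∀ x : R, NN P (d x * d (star x) - (x * star x - star x * x))) :
    ∀ x y : R, x * y - y * x ∈ P := by
  have smove : ∀ a c : R, a * (s * c) = s * (a * c) := central_move hs_c
  rcases pipeline hprime hchar hs_c hs_star hsP hd_add hd_mul (fun u w => w * u - u * w)
      (fun u v w => by noncomm_ring) (fun u v w => by noncomm_ring)
      (fun u w => by noncomm_ring)
      (fun u w => by
        show w * (s * u) - s * u * w = s * (w * u - u * w)
        rw [show w * (s * u) = s * (w * u) from smove w u, mul_assoc]; noncomm_ring)
      (fun u w => by
        show s * w * u - u * (s * w) = s * (w * u - u * w)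
        rw [smove u w, mul_assoc]; noncomm_ring)
      (fun x => NN_congr (by noncomm_ring) (hyp x)) with h | h
  · exact comm_of_NNall hprime
      (fun x y => NN_congr (show -(y * x - x * y) = x * y - y * x by noncomm_ring) (h x y).neg)
  · exact CI hprime hd_mul (η := -1)
      (fun r => by rw [neg_one_mul, mul_neg_one]) (by rw [neg_one_mul, neg_neg])
      (fun x y => NN_congr (by noncomm_ring) (h x y))

lemma comm_of_pa
    (hyp : ∀ x : R, NN P (d x * d (star x) + (x * star x + star x * x))) :
    ∀ x y : R, x * y - y * x ∈ P := by
  have smove : ∀ a c : R, a * (s * c) = s * (a * c) := central_move hs_c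
  have two_c : ∀ r : R, 2 * r = r * 2 := fun r => by rw [two_mul, mul_two]
  have key : ∀ z : R, NN P z := by
    rcases pipeline hprime hchar hs_c hs_star hsP hd_add hd_mul (fun u w => u * w + w * u)
        (fun u v w => by noncomm_ring) (fun u v w => by noncomm_ring)
        (fun u w => by noncomm_ring)
        (fun u w => by
          show s * u * w + w * (s * u) = s * (u * w + w * u)
          rw [show w * (s * u) = s * (w * u) from smove w u, mul_assoc]; noncomm_ring)
        (fun u w => by
          show u * (s * w) + s * w * u = s * (u * w + w * u)
          rw [smove u w, mul_assoc]; noncomm_ring)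
        hyp with h | h
    · intro z
      exact cancelN hprime two_c hchar
        (NN_congr (show z * 1 + 1 * z = 2 * z by noncomm_ring) (h z 1))
    · intro z
      refine cancelN hprime two_c hchar (NN_congr ?_ (h z 1))
      rw [d_one' hd_mul]; noncomm_ring
  exact fun x y => key x y

lemma comm_of_ma
    (hyp : ∀ x : R, NN P (d x * d (star x) - (x * star x + star x * x))) :
    ∀ x y : R, x * y - y * x ∈ P := by
  have smove : ∀ a c : R, a * (s * c) = s * (a * c) := central_move hs_c
  have two_c : ∀ r : R, 2 * r = r * 2 := fun r => by rw [two_mul, mul_two]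
  have key : ∀ z : R, NN P z := by
    rcases pipeline hprime hchar hs_c hs_star hsP hd_add hd_mul (fun u w => -(u * w + w * u))
        (fun u v w => by noncomm_ring) (fun u v w => by noncomm_ring)
        (fun u w => by noncomm_ring)
        (fun u w => by
          show -(s * u * w + w * (s * u)) = s * -(u * w + w * u)
          rw [show w * (s * u) = s * (w * u) from smove w u, mul_assoc]; noncomm_ring)
        (fun u w => by
          show -(u * (s * w) + s * w * u) = s * -(u * w + w * u)
          rw [smove u w, mul_assoc]; noncomm_ring)
        (fun x => NN_congr (by noncomm_ring) (hyp x)) with h | h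
    · intro z
      exact cancelN hprime two_c hchar
        (NN_congr (show -(-(z * 1 + 1 * z)) = 2 * z by noncomm_ring) (h z 1).neg)
    · intro z
      refine cancelN hprime two_c hchar (NN_congr ?_ (h z 1).neg)
      rw [d_one' hd_mul]; noncomm_ring
  exact fun x y => key x y

end Endgames

end S13

/-- Corollary 9.
Let `R` be a ring with involution `*`, `P` a prime ideal of `R` with `char (R/P) ≠ 2`
(equivalently, since `P` is proper, `(2 : R) ∉ P`), and suppose `*` is of `P`-second kind
(`Z(R) ∩ S(R) ⊄ P`).  If `d` is a derivation of `R`, the following are equivalent: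
(1) the image of `d(x)d(x*) ± [x, x*]` lies in `Z(R/P)` for all `x ∈ R`;
(2) the image of `d(x)d(x*) ± x ∘ x*` lies in `Z(R/P)` for all `x ∈ R`;
(3) `R/P` is an integral domain.
(Formalized, for each choice of sign, as (1) ↔ (3) and (2) ↔ (3).) -/
theorem statement13 {R : Type*} [Ring R] [StarRing R] (P : TwoSidedIdeal R)
    (hP_proper : (1 : R) ∉ P)
    (hP_prime : ∀ a b : R, (∀ r : R, a * r * b ∈ P) → a ∈ P ∨ b ∈ P)
    (hchar : (2 : R) ∉ P)
    (hsecond : ∃ s : R, (∀ r : R, s * r = r * s) ∧ star s = -s ∧ s ∉ P)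
    (d : R → R)
    (hd_add : ∀ x y : R, d (x + y) = d x + d y)
    (hd_mul : ∀ x y : R, d (x * y) = d x * y + x * d y) :
    -- the `+` versions
    (((∀ x r : R,
        (d x * d (star x) + (x * star x - star x * x)) * r
          - r * (d x * d (star x) + (x * star x - star x * x)) ∈ P)
      ↔ ((1 : R) ∉ P ∧ (∀ x y : R, x * y - y * x ∈ P) ∧
          (∀ x y : R, x * y ∈ P → x ∈ P ∨ y ∈ P)))
    ∧
    ((∀ x r : R,
        (d x * d (star x) + (x * star x + star x * x)) * r
          - r * (d x * d (star x) + (x * star x + star x * x)) ∈ P)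
      ↔ ((1 : R) ∉ P ∧ (∀ x y : R, x * y - y * x ∈ P) ∧
          (∀ x y : R, x * y ∈ P → x ∈ P ∨ y ∈ P))))
    ∧
    -- the `−` versions
    (((∀ x r : R,
        (d x * d (star x) - (x * star x - star x * x)) * r
          - r * (d x * d (star x) - (x * star x - star x * x)) ∈ P)
      ↔ ((1 : R) ∉ P ∧ (∀ x y : R, x * y - y * x ∈ P) ∧
          (∀ x y : R, x * y ∈ P → x ∈ P ∨ y ∈ P)))
    ∧
    ((∀ x r : R,
        (d x * d (star x) - (x * star x + star x * x)) * r
          - r * (d x * d (star x) - (x * star x + star x * x)) ∈ P)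
      ↔ ((1 : R) ∉ P ∧ (∀ x y : R, x * y - y * x ∈ P) ∧
          (∀ x y : R, x * y ∈ P → x ∈ P ∨ y ∈ P)))) := by
  obtain ⟨s, hs_c, hs_star, hsP⟩ := hsecond
  have pack : (∀ x y : R, x * y - y * x ∈ P) →
      ((1 : R) ∉ P ∧ (∀ x y : R, x * y - y * x ∈ P) ∧
        (∀ x y : R, x * y ∈ P → x ∈ P ∨ y ∈ P)) :=
    fun hcomm => ⟨hP_proper, hcomm, S13.primeQuot hP_prime hcomm⟩
  refine ⟨⟨⟨?_, ?_⟩, ⟨?_, ?_⟩⟩, ⟨⟨?_, ?_⟩, ⟨?_, ?_⟩⟩⟩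
  · intro hyp
    exact pack (S13.comm_of_pc hP_prime hchar hs_c hs_star hsP hd_add hd_mul
      (fun x => S13.NN_intro (hyp x)))
  · rintro ⟨-, hcomm, -⟩ x r; exact hcomm _ r
  · intro hyp
    exact pack (S13.comm_of_pa hP_prime hchar hs_c hs_star hsP hd_add hd_mul
      (fun x => S13.NN_intro (hyp x)))
  · rintro ⟨-, hcomm, -⟩ x r; exact hcomm _ r
  · intro hyp
    exact pack (S13.comm_of_mc hP_prime hchar hs_c hs_star hsP hd_add hd_mul
      (fun x => S13.NN_intro (hyp x)))
  · rintro ⟨-, hcomm, -⟩ x r; exact hcomm _ r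
  · intro hyp
    exact pack (S13.comm_of_ma hP_prime hchar hs_c hs_star hsP hd_add hd_mul
      (fun x => S13.NN_intro (hyp x)))
  · rintro ⟨-, hcomm, -⟩ x r; exact hcomm _ r
end

section
/- Let R be a 2-torsion free prime ring with involution * of the second kind (Z(R) ∩ S(R) ≠ {0}), and let d₁ and d₂ be derivations of R. Then the following are equivalent: (1) d₁(x)d₂(x*) − [x, x*] ∈ Z(R) for all x ∈ R; (2) d₁(x)d₂(x*) − x ∘ x* ∈ Z(R) for all x ∈ R; (3) R is an integral domain. The same equivalence holds with the − signs in (1) and (2) replaced by + signs. -/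
namespace St14

variable {R : Type*} [Ring R]

def Cen (a : R) : Prop := ∀ r, a * r = r * a

lemma cen_of_eq {a b : R} (h : a = b) (ha : Cen a) : Cen b := h ▸ ha

lemma cen_add {a b : R} (ha : Cen a) (hb : Cen b) : Cen (a + b) := fun r => by
  rw [add_mul, mul_add, ha r, hb r]

lemma cen_neg {a : R} (ha : Cen a) : Cen (-a) := fun r => by
  rw [neg_mul, mul_neg, ha r]

lemma cen_sub {a b : R} (ha : Cen a) (hb : Cen b) : Cen (a - b) := fun r => by
  rw [sub_mul, mul_sub, ha r, hb r]

lemma cen_mul {a b : R} (ha : Cen a) (hb : Cen b) : Cen (a * b) := fun r => by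
  rw [mul_assoc, hb r, ← mul_assoc, ha r, mul_assoc]

lemma cen_two (h2tor : ∀ a : R, 2 * a = 0 → a = 0) {a : R} (h : Cen (a + a)) : Cen a := by
  intro r
  have key : 2 * (a * r - r * a) = (a + a) * r - r * (a + a) := by noncomm_ring
  rw [h r, sub_self] at key
  exact sub_eq_zero.mp (h2tor _ key)

lemma pr_cancel (hprime : ∀ a b : R, (∀ r : R, a * r * b = 0) → a = 0 ∨ b = 0)
    {c : R} (hc : Cen c) (hne : c ≠ 0) {t : R} (h : c * t = 0) : t = 0 := by
  have : ∀ r : R, c * r * t = 0 := fun r => by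
    rw [hc r, mul_assoc, h, mul_zero]
  exact (hprime c t this).resolve_left hne

lemma pr_cancel' (hprime : ∀ a b : R, (∀ r : R, a * r * b = 0) → a = 0 ∨ b = 0)
    {c : R} (hc : Cen c) (hne : c ≠ 0) {t : R} (h : t * c = 0) : t = 0 := by
  have : ∀ r : R, t * r * c = 0 := fun r => by
    rw [mul_assoc, ← hc r, ← mul_assoc, h, zero_mul]
  exact (hprime t c this).resolve_right hne

lemma cen_cancel_cen (hprime : ∀ a b : R, (∀ r : R, a * r * b = 0) → a = 0 ∨ b = 0)
    {c : R} (hc : Cen c) (hne : c ≠ 0) {t : R} (h : Cen (c * t)) : Cen t := by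
  intro r
  have h0 : c * (t * r - r * t) = 0 := by
    have e : r * (c * t) = c * (r * t) := by rw [← mul_assoc, ← hc r, mul_assoc]
    have e2 : c * (t * r - r * t) = (c * t) * r - c * (r * t) := by noncomm_ring
    rw [e2, ← e, h r, sub_self]
  exact sub_eq_zero.mp (pr_cancel hprime hc hne h0)

lemma dzero {d : R → R} (hadd : ∀ x y : R, d (x + y) = d x + d y) : d 0 = 0 := by
  have := hadd 0 0
  rw [add_zero] at this
  exact (left_eq_add.mp this)

lemma dneg {d : R → R} (hadd : ∀ x y : R, d (x + y) = d x + d y) (x : R) : d (-x) = - d x := by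
  have := hadd x (-x)
  rw [add_neg_cancel, dzero hadd] at this
  exact (eq_neg_of_add_eq_zero_right this.symm)

lemma done {d : R → R} (hmul : ∀ x y : R, d (x * y) = d x * y + x * d y) : d 1 = 0 := by
  have := hmul 1 1
  rw [mul_one, one_mul, mul_one] at this
  exact (left_eq_add.mp this)

lemma dcen {d : R → R} (hmul : ∀ x y : R, d (x * y) = d x * y + x * d y)
    {x : R} (hx : Cen x) : Cen (d x) := by
  intro r
  have h1 : d (x * r) = d (r * x) := by rw [hx r]
  rw [hmul, hmul, hx (d r)] at h1
  -- h1 : d x * r + d r * x = d r * x + r * d x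
  have := add_right_cancel (a := d x * r) (b := d r * x) (c := r * d x) ?_
  · exact this
  · rw [add_comm (d r * x) (r * d x)] at h1
    exact h1

end St14

namespace St14
variable {R : Type*} [Ring R]

lemma L1q (hprime : ∀ a b : R, (∀ r : R, a * r * b = 0) → a = 0 ∨ b = 0)
    {q : R} (hq : ∀ z : R, Cen (z * q - q * z)) : Cen q := by
  intro z
  set c := z * q - q * z with hcdef
  have hc : Cen c := hq z
  have hcq : Cen (c * q) := by
    have e : (z * q) * q - q * (z * q) = c * q := by rw [hcdef]; noncomm_ring
    exact cen_of_eq e (hq (z * q))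
  have hz1 : z * (c * q) - (c * q) * z = 0 := sub_eq_zero.mpr (hcq z).symm
  have hz2 : c * z - z * c = 0 := sub_eq_zero.mpr (hc z)
  have key : c * c = (z * (c * q) - (c * q) * z) + (c * z - z * c) * q := by
    rw [hcdef]; noncomm_ring
  rw [hz1, hz2, zero_mul, add_zero] at key
  have hcc : ∀ t : R, c * t * c = 0 := fun t => by
    rw [hc t, mul_assoc, key, mul_zero]
  have hc0 : c = 0 := by rcases hprime c c hcc with h | h <;> exact h
  have : z * q - q * z = 0 := hc0
  exact (sub_eq_zero.mp this).symm

/-- a derivation with central values on a noncommutative prime ring is zero -/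
lemma delta_zero (hprime : ∀ a b : R, (∀ r : R, a * r * b = 0) → a = 0 ∨ b = 0)
    {D : R → R} (hadd : ∀ x y : R, D (x + y) = D x + D y)
    (hmul : ∀ x y : R, D (x * y) = D x * y + x * D y)
    (hDc : ∀ x : R, Cen (D x)) {u : R} (hu : ¬ Cen u) : ∀ x : R, D x = 0 := by
  have step : ∀ w : R, D w = 0 ∨ Cen w := by
    intro w
    by_cases h : D w = 0
    · exact Or.inl h
    · right
      intro v
      -- show w * v = v * w
      have hwv : ∀ v : R, D w * (v * w - w * v) = 0 := by
        intro v
        have h1 : Cen (D w * v + w * D v) := by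
          have := hDc (w * v)
          rw [hmul] at this
          exact this
        have e1 : (D w * v + w * D v) * w - w * (D w * v + w * D v) = 0 :=
          sub_eq_zero.mpr (h1 w)
        have e2 : D v * w - w * D v = 0 := sub_eq_zero.mpr (hDc v w)
        have e3 : w * D w - D w * w = 0 := sub_eq_zero.mpr (hDc w w).symm
        have key : D w * (v * w - w * v) =
            ((D w * v + w * D v) * w - w * (D w * v + w * D v))
              - w * (D v * w - w * D v) + (w * D w - D w * w) * v := by
          noncomm_ring
        rw [e1, e2, e3, mul_zero, zero_mul, sub_zero, add_zero] at key
        exact key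
      have hmid : ∀ t : R, D w * t * (v * w - w * v) = 0 := fun t => by
        rw [hDc w t, mul_assoc, hwv v, mul_zero]
      have := (hprime _ _ hmid).resolve_left h
      have := sub_eq_zero.mp this
      exact this.symm
  intro x
  by_cases hx : Cen x
  · have h1 : ¬ Cen (u + x) := by
      intro hc
      exact hu (cen_of_eq (by abel) (cen_sub hc hx))
    have h2 : D (u + x) = 0 := (step (u + x)).resolve_right h1
    have h3 : D u = 0 := (step u).resolve_right hu
    rw [hadd, h3, zero_add] at h2
    exact h2
  · exact (step x).resolve_right hx

end St14

namespace St14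
variable {R : Type*} [Ring R]

/-- Key star-free lemma: if `d₁(x)d₂(y) + [x,y]` is always central in a prime ring,
then the ring is commutative. -/
lemma L2 (hprime : ∀ a b : R, (∀ r : R, a * r * b = 0) → a = 0 ∨ b = 0)
    (D₁ D₂ : R → R)
    (h1a : ∀ x y : R, D₁ (x + y) = D₁ x + D₁ y)
    (h1m : ∀ x y : R, D₁ (x * y) = D₁ x * y + x * D₁ y)
    (h2a : ∀ x y : R, D₂ (x + y) = D₂ x + D₂ y)
    (h2m : ∀ x y : R, D₂ (x * y) = D₂ x * y + x * D₂ y)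
    (hT : ∀ x y : R, Cen (D₁ x * D₂ y + (x * y - y * x))) :
    ∀ u v : R, u * v = v * u := by
  by_contra hnc
  push_neg at hnc
  obtain ⟨u₀, v₀, h0⟩ := hnc
  have hu₀ : ¬ Cen u₀ := fun hc => h0 (hc v₀)
  -- if all commutators are central we get a contradiction
  have comm_contra : (∀ x y : R, Cen (x * y - y * x)) → False := by
    intro h
    exact h0 ((L1q hprime (q := v₀) (fun z => h z v₀)) u₀).symm
  -- D₁ ≡ 0 gives contradiction
  have hD₁ne : ¬ (∀ z : R, D₁ z = 0) := by
    intro h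
    apply comm_contra
    intro x y
    have := hT x y
    rw [h x, zero_mul, zero_add] at this
    exact this
  -- D₂ not central-valued : get x₀
  have hx₀ : ∃ x₀ : R, ¬ Cen (D₂ x₀) := by
    by_contra h
    push_neg at h
    have h' : ∀ x : R, Cen (D₂ x) := fun x => not_not.mp (by simpa using h x)
    have hz := delta_zero hprime h2a h2m h' hu₀
    apply comm_contra
    intro x y
    have := hT x y
    rw [hz y, mul_zero, zero_add] at this
    exact this
  obtain ⟨x₀, hq⟩ := hx₀
  -- step (★): for noncentral x, T x z = T z x
  have hstar : ∀ x : R, ¬ Cen x → ∀ z : R,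
      D₁ x * D₂ z + (x * z - z * x) = D₁ z * D₂ x + (z * x - x * z) := by
    intro x hx z
    set A := D₁ x * D₂ z + (x * z - z * x) with hAdef
    set B := D₁ z * D₂ x + (z * x - x * z) with hBdef
    set W := D₁ x * z * D₂ x with hWdef
    have hA : Cen A := hT x z
    have hB : Cen B := hT z x
    have hJ : Cen (A * x + W) := by
      have e : D₁ x * D₂ (z * x) + (x * (z * x) - (z * x) * x) = A * x + W := by
        rw [hAdef, hWdef, h2m]; noncomm_ring
      exact cen_of_eq e (hT x (z * x))
    have hJ' : Cen (x * B + W) := by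
      have e : D₁ (x * z) * D₂ x + ((x * z) * x - x * (x * z)) = x * B + W := by
        rw [hBdef, hWdef, h1m]; noncomm_ring
      exact cen_of_eq e (hT (x * z) x)
    have hAx : ∀ r : R, A * (x * r - r * x) = r * W - W * r := by
      intro r
      have g : (A * x + W) * r - r * (A * x + W) = 0 := sub_eq_zero.mpr (hJ r)
      have gA : A * r - r * A = 0 := sub_eq_zero.mpr (hA r)
      have key : A * (x * r - r * x) - (r * W - W * r) =
          ((A * x + W) * r - r * (A * x + W)) - (A * r - r * A) * x := by
        noncomm_ring
      rw [g, gA, zero_mul, sub_zero] at key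
      exact sub_eq_zero.mp key
    have hBx : ∀ r : R, B * (x * r - r * x) = r * W - W * r := by
      intro r
      have g : (x * B + W) * r - r * (x * B + W) = 0 := sub_eq_zero.mpr (hJ' r)
      have g1 : x * B - B * x = 0 := sub_eq_zero.mpr (hB x).symm
      have g2 : (r * x) * B - B * (r * x) = 0 := sub_eq_zero.mpr (hB (r * x)).symm
      have key : B * (x * r - r * x) - (r * W - W * r) =
          ((x * B + W) * r - r * (x * B + W)) - (x * B - B * x) * r
            + ((r * x) * B - B * (r * x)) := by
        noncomm_ring
      rw [g, g1, g2, zero_mul, sub_zero, add_zero] at key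
      exact sub_eq_zero.mp key
    obtain ⟨r₀, hr₀⟩ : ∃ r : R, x * r ≠ r * x := by
      by_contra h
      push_neg at h
      exact hx h
    have hD0 : ∀ t : R, (A - B) * t * (x * r₀ - r₀ * x) = 0 := by
      intro t
      have hcAB : Cen (A - B) := cen_sub hA hB
      have : (A - B) * (x * r₀ - r₀ * x) = 0 := by
        rw [sub_mul, hAx r₀, hBx r₀, sub_self]
      rw [hcAB t, mul_assoc, this, mul_zero]
    have := (hprime _ _ hD0).resolve_right (sub_ne_zero.mpr hr₀)
    have hAB : A = B := sub_eq_zero.mp this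
    rw [hAdef, hBdef] at hAB
    exact hAB
  -- (R∀)
  have hR : ∀ x z w : R,
      (D₁ x * z - z * D₁ x) * D₂ w = D₁ z * (w * D₂ x - D₂ x * w) := by
    intro x z w
    by_cases hx : Cen x
    · have hc1 : Cen (D₁ x) := dcen h1m hx
      have hc2 : Cen (D₂ x) := dcen h2m hx
      rw [sub_eq_zero.mpr (hc1 z), sub_eq_zero.mpr (hc2 w).symm, zero_mul, mul_zero]
    · have hE : ∀ t : R,
          D₁ x * D₂ t + (x * t - t * x) - (D₁ t * D₂ x + (t * x - x * t)) = 0 :=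
        fun t => sub_eq_zero.mpr (hstar x hx t)
      have h1 := hE (z * w)
      rw [h1m, h2m] at h1
      have h2 := hE z
      have h3 := hE w
      have key : (D₁ x * z - z * D₁ x) * D₂ w - D₁ z * (w * D₂ x - D₂ x * w) =
          (D₁ x * (D₂ z * w + z * D₂ w) + (x * (z * w) - (z * w) * x)
            - ((D₁ z * w + z * D₁ w) * D₂ x + ((z * w) * x - x * (z * w))))
          - ((D₁ x * D₂ z + (x * z - z * x) - (D₁ z * D₂ x + (z * x - x * z))) * w
            + z * (D₁ x * D₂ w + (x * w - w * x) - (D₁ w * D₂ x + (w * x - x * w)))) := by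
        noncomm_ring
      rw [h1, h2, h3, zero_mul, mul_zero, add_zero, sub_zero] at key
      exact sub_eq_zero.mp key
  -- (S∀)
  have hS : ∀ x z w v : R,
      (D₁ x * z - z * D₁ x) * w * D₂ v = D₁ z * w * (v * D₂ x - D₂ x * v) := by
    intro x z w v
    have h1 := hR x z (w * v)
    rw [h2m] at h1
    have h2 := hR x z w
    have key : (D₁ x * z - z * D₁ x) * w * D₂ v - D₁ z * w * (v * D₂ x - D₂ x * v) =
        ((D₁ x * z - z * D₁ x) * (D₂ w * v + w * D₂ v)
          - D₁ z * ((w * v) * D₂ x - D₂ x * (w * v)))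
        - ((D₁ x * z - z * D₁ x) * D₂ w - D₁ z * (w * D₂ x - D₂ x * w)) * v := by
      noncomm_ring
    rw [sub_eq_zero.mpr h1, sub_eq_zero.mpr h2, zero_mul, sub_zero] at key
    exact sub_eq_zero.mp key
  -- endgame
  set q := D₂ x₀ with hqdef
  set p := D₁ x₀ with hpdef
  obtain ⟨v₁, hv₁⟩ : ∃ r : R, q * r ≠ r * q := by
    by_contra h; push_neg at h; exact hq h
  have hv₁' : v₁ * q - q * v₁ ≠ 0 := sub_ne_zero.mpr (fun h => hv₁ (by rw [h]))
  have hpnc : ¬ Cen p := by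
    intro hp
    apply hD₁ne
    intro z
    have hmid : ∀ w : R, D₁ z * w * (v₁ * q - q * v₁) = 0 := by
      intro w
      have := hS x₀ z w v₁
      rw [← hpdef, ← hqdef] at this
      rw [sub_eq_zero.mpr (hp z), zero_mul, zero_mul] at this
      exact this.symm
    exact (hprime _ _ hmid).resolve_right hv₁'
  obtain ⟨z₁, hz₁⟩ : ∃ r : R, p * r ≠ r * p := by
    by_contra h; push_neg at h; exact hpnc h
  have hz₁' : p * z₁ - z₁ * p ≠ 0 := sub_ne_zero.mpr hz₁
  have hD₂q : D₂ q = 0 := by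
    have hmid : ∀ w : R, (p * z₁ - z₁ * p) * w * D₂ q = 0 := by
      intro w
      have := hS x₀ z₁ w q
      rw [← hpdef, ← hqdef] at this
      rw [sub_self, mul_zero] at this
      exact this
    exact (hprime _ _ hmid).resolve_left hz₁'
  have hfin : ∀ z : R, Cen (z * q - q * z) := by
    intro z
    have := hT z q
    rw [hD₂q, mul_zero, zero_add] at this
    exact this
  exact hq (L1q hprime hfin)

end St14

namespace St14
variable {R : Type*} [Ring R]

lemma FIN (hprime : ∀ a b : R, (∀ r : R, a * r * b = 0) → a = 0 ∨ b = 0)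
    (h2tor : ∀ a : R, 2 * a = 0 → a = 0)
    (e₁ e₂ : R → R)
    (h1a : ∀ x y : R, e₁ (x + y) = e₁ x + e₁ y)
    (h1m : ∀ x y : R, e₁ (x * y) = e₁ x * y + x * e₁ y)
    (h2a : ∀ x y : R, e₂ (x + y) = e₂ x + e₂ y)
    (h2m : ∀ x y : R, e₂ (x * y) = e₂ x * y + x * e₂ y)
    (μ : R) (hμ : μ = 1 ∨ μ = -1)
    (hH : ∀ x y : R, Cen (e₁ x * e₂ y + (x * y + μ * (y * x)))) :
    ∀ u v : R, u * v = v * u := by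
  rcases hμ with hμ | hμ <;> subst hμ
  · -- anticommutator case : x ∘ y central for all, take y = 1
    intro u v
    have h1 : Cen (u + u) := by
      have := hH u 1
      rw [done h2m, mul_zero, zero_add, mul_one, one_mul, one_mul] at this
      exact this
    exact cen_two h2tor h1 v
  · -- commutator case : reduce to L2
    apply L2 hprime e₁ e₂ h1a h1m h2a h2m
    intro x y
    have e : e₁ x * e₂ y + (x * y + -1 * (y * x)) = e₁ x * e₂ y + (x * y - y * x) := by
      noncomm_ring
    exact cen_of_eq e (hH x y)

end St14

namespace St14
variable {R : Type*} [Ring R]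

lemma MSL [StarRing R]
    (hprime : ∀ a b : R, (∀ r : R, a * r * b = 0) → a = 0 ∨ b = 0)
    (h2tor : ∀ a : R, 2 * a = 0 → a = 0)
    (s : R) (hs : ∀ r : R, s * r = r * s) (hss : star s = -s) (hsne : s ≠ 0)
    (d₁ d₂ : R → R)
    (hd₁_add : ∀ x y : R, d₁ (x + y) = d₁ x + d₁ y)
    (hd₁_mul : ∀ x y : R, d₁ (x * y) = d₁ x * y + x * d₁ y)
    (hd₂_add : ∀ x y : R, d₂ (x + y) = d₂ x + d₂ y)
    (hd₂_mul : ∀ x y : R, d₂ (x * y) = d₂ x * y + x * d₂ y)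
    (μ : R) (hμ : μ = 1 ∨ μ = -1)
    (hmain : ∀ x : R, Cen (d₁ x * d₂ (star x) + (x * star x + μ * (star x * x)))) :
    ∀ u v : R, u * v = v * u := by
  have hsc : Cen s := hs
  have ha : Cen (d₂ s) := dcen hd₂_mul hsc
  have hb : Cen (d₁ s) := dcen hd₁_mul hsc
  have hmc : Cen μ := by
    rcases hμ with h | h <;> subst h <;> intro r
    · rw [one_mul, mul_one]
    · rw [neg_one_mul, mul_neg_one]
  -- pull lemmas
  have ps1 : ∀ t : R, t * s = s * t := fun t => (hsc t).symm
  have ps2 : ∀ t u : R, t * (s * u) = s * (t * u) := fun t u => by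
    rw [← mul_assoc, ← hsc t, mul_assoc]
  have pa1 : ∀ t : R, t * d₂ s = d₂ s * t := fun t => (ha t).symm
  have pa2 : ∀ t u : R, t * (d₂ s * u) = d₂ s * (t * u) := fun t u => by
    rw [← mul_assoc, ← ha t, mul_assoc]
  have pb1 : ∀ t : R, t * d₁ s = d₁ s * t := fun t => (hb t).symm
  have pb2 : ∀ t u : R, t * (d₁ s * u) = d₁ s * (t * u) := fun t u => by
    rw [← mul_assoc, ← hb t, mul_assoc]
  have pm1 : ∀ t : R, t * μ = μ * t := fun t => (hmc t).symm
  have pm2 : ∀ t u : R, t * (μ * u) = μ * (t * u) := fun t u => by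
    rw [← mul_assoc, ← hmc t, mul_assoc]
  -- linearization
  have hP : ∀ x y : R, Cen (d₁ x * d₂ (star y) + d₁ y * d₂ (star x)
      + (x * star y + y * star x) + μ * (star y * x + star x * y)) := by
    intro x y
    have h := cen_sub (cen_sub (hmain (x + y)) (hmain x)) (hmain y)
    refine cen_of_eq ?_ h
    rw [star_add, hd₁_add, hd₂_add]
    noncomm_ring
  -- step (C)
  have hC : ∀ x y : R, Cen (-(d₂ s * (d₁ x * star y))
      + (s * (d₁ y * d₂ (star x)) + s * (d₁ y * d₂ (star x)))
      + d₁ s * (y * d₂ (star x))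
      + (s * (y * star x) + s * (y * star x))
      + (μ * (s * (star x * y)) + μ * (s * (star x * y)))) := by
    intro x y
    have h1 := hP x (y * s)
    rw [star_mul, hss, neg_mul, dneg hd₂_add, hd₁_mul, hd₂_mul] at h1
    have h2 := cen_mul hsc (hP x y)
    refine cen_of_eq ?_ (cen_add h1 h2)
    try simp only [mul_add, add_mul, mul_sub, sub_mul, mul_neg, neg_mul, neg_neg, mul_assoc]
    try simp only [ps1, ps2]
    try simp only [pa1, pa2]
    try simp only [pb1, pb2]
    try simp only [pm1, pm2]
    all_goals first | abel | noncomm_ring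
  -- step (F)
  have hF : ∀ x y : R, Cen (d₂ s * (d₁ x * star y) + d₁ s * (y * d₂ (star x))) := by
    intro x y
    have h1 := hC x (y * s)
    rw [star_mul, hss, neg_mul, hd₁_mul] at h1
    have h2 := cen_mul hsc (hC x y)
    have h3 := cen_sub h1 h2
    have h4 : Cen (s * (d₂ s * (d₁ x * star y) + d₁ s * (y * d₂ (star x)))
        + s * (d₂ s * (d₁ x * star y) + d₁ s * (y * d₂ (star x)))) := by
      refine cen_of_eq ?_ h3
      try simp only [mul_add, add_mul, mul_sub, sub_mul, mul_neg, neg_mul, neg_neg, mul_assoc]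
      try simp only [ps1, ps2]
      try simp only [pa1, pa2]
      try simp only [pb1, pb2]
      try simp only [pm1, pm2]
      all_goals first | abel | noncomm_ring
    exact cen_cancel_cen hprime hsc hsne (cen_two h2tor h4)
  -- step (G)
  have hG : ∀ x y : R, Cen (s * (d₁ y * d₂ (star x)) + d₁ s * (y * d₂ (star x))
      + s * (y * star x) + μ * (s * (star x * y))) := by
    intro x y
    have h3 := cen_add (hC x y) (hF x y)
    have h4 : Cen ((s * (d₁ y * d₂ (star x)) + d₁ s * (y * d₂ (star x))
          + s * (y * star x) + μ * (s * (star x * y)))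
        + (s * (d₁ y * d₂ (star x)) + d₁ s * (y * d₂ (star x))
          + s * (y * star x) + μ * (s * (star x * y)))) := by
      refine cen_of_eq ?_ h3
      try simp only [mul_add, add_mul, mul_sub, sub_mul, mul_neg, neg_mul, neg_neg, mul_assoc]
      try simp only [ps1, ps2]
      try simp only [pa1, pa2]
      try simp only [pb1, pb2]
      try simp only [pm1, pm2]
      all_goals first | abel | noncomm_ring
    exact cen_two h2tor h4
  -- star-stripped (G)
  have hGs : ∀ x y : R, Cen (s * (d₁ y * d₂ x) + d₁ s * (y * d₂ x)
      + s * (y * x) + μ * (s * (x * y))) := by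
    intro x y
    have := hG (star x) y
    rwa [star_star] at this
  -- step (I)
  have hI' : ∀ x y : R, Cen (d₂ s * ((s * d₁ y + d₁ s * y) * star x)) := by
    intro x y
    have h1 := hG (x * s) y
    rw [star_mul, hss, neg_mul, dneg hd₂_add, hd₂_mul] at h1
    have h2 := cen_mul hsc (hG x y)
    have h3 := cen_add h1 h2
    have h4 : Cen (-(d₂ s * ((s * d₁ y + d₁ s * y) * star x))) := by
      refine cen_of_eq ?_ h3
      try simp only [mul_add, add_mul, mul_sub, sub_mul, mul_neg, neg_mul, neg_neg, mul_assoc]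
      try simp only [ps1, ps2]
      try simp only [pa1, pa2]
      try simp only [pb1, pb2]
      try simp only [pm1, pm2]
      all_goals first | abel | noncomm_ring
    exact cen_of_eq (neg_neg _) (cen_neg h4)
  have hI : ∀ x y : R, Cen (d₂ s * ((s * d₁ y + d₁ s * y) * x)) := by
    intro x y
    have := hI' (star x) y
    rwa [star_star] at this
  by_cases hA : d₂ s = 0
  · -- a = 0 branch
    have hF2 : ∀ x y : R, Cen (d₁ s * (y * d₂ x)) := by
      intro x y
      have h := hF (star x) y
      rw [star_star, hA, zero_mul, zero_add] at h
      exact h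
    by_cases hB : d₁ s = 0
    · -- b = 0 : get (H) and finish by FIN
      have hH : ∀ x y : R, Cen (d₁ y * d₂ x + (y * x + μ * (x * y))) := by
        intro x y
        have h := hGs x y
        rw [hB, zero_mul, add_zero] at h
        have e : s * (d₁ y * d₂ x) + s * (y * x) + μ * (s * (x * y))
            = s * (d₁ y * d₂ x + (y * x + μ * (x * y))) := by
          try simp only [mul_add, add_mul, mul_assoc]
          try simp only [ps1, ps2]
          try simp only [pm1, pm2]
          all_goals first | abel | noncomm_ring
        exact cen_cancel_cen hprime hsc hsne (cen_of_eq e h)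
      exact FIN hprime h2tor d₁ d₂ hd₁_add hd₁_mul hd₂_add hd₂_mul μ hμ
        (fun x y => hH y x)
    · -- b ≠ 0
      have hcyd : ∀ x y : R, Cen (y * d₂ x) := fun x y =>
        cen_cancel_cen hprime hb hB (hF2 x y)
      by_cases hd2 : ∀ x : R, d₂ x = 0
      · -- d₂ ≡ 0
        have hH : ∀ x y : R, Cen (y * x + μ * (x * y)) := by
          intro x y
          have h := hGs x y
          rw [hd2 x] at h
          simp only [mul_zero, add_zero, zero_add] at h
          have e : s * (y * x) + μ * (s * (x * y)) = s * (y * x + μ * (x * y)) := by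
            try simp only [mul_add, add_mul, mul_assoc]
            try simp only [ps1, ps2]
            try simp only [pm1, pm2]
            all_goals first | abel | noncomm_ring
          exact cen_cancel_cen hprime hsc hsne (cen_of_eq e h)
        refine FIN hprime h2tor (fun _ => (0 : R)) (fun _ => (0 : R))
          (by simp) (by simp) (by simp) (by simp) μ hμ (fun x y => ?_)
        exact cen_of_eq (by noncomm_ring) (hH y x)
      · push_neg at hd2
        obtain ⟨x₂, hx₂⟩ := hd2
        have hc2 : Cen (d₂ x₂) := by
          have := hcyd x₂ 1
          rwa [one_mul] at this
        intro u v
        have hker : (u * v - v * u) * d₂ x₂ = 0 := by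
          have h1 : (u * d₂ x₂) * v = v * (u * d₂ x₂) := hcyd x₂ u v
          have e1 : (u * v) * d₂ x₂ = (u * d₂ x₂) * v := by
            rw [mul_assoc, ← hc2 v, ← mul_assoc]
          have e2 : (v * u) * d₂ x₂ = v * (u * d₂ x₂) := by rw [mul_assoc]
          rw [sub_mul, e1, e2, h1, sub_self]
        exact sub_eq_zero.mp (pr_cancel' hprime hc2 hx₂ hker)
  · -- a ≠ 0 branch
    by_cases hw : ∀ y : R, d₂ s * (s * d₁ y + d₁ s * y) = 0
    · -- w ≡ 0 : s * d₁ y = -(d₁ s * y)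
      have hw0 : ∀ y : R, s * d₁ y + d₁ s * y = 0 := fun y =>
        pr_cancel hprime ha hA (hw y)
      have hsd : ∀ y : R, s * d₁ y = -(d₁ s * y) := fun y =>
        eq_neg_of_add_eq_zero_left (hw0 y)
      have hH : ∀ x y : R, Cen (y * x + μ * (x * y)) := by
        intro x y
        have h := hGs x y
        have e1 : s * (d₁ y * d₂ x) = -(d₁ s * (y * d₂ x)) := by
          rw [← mul_assoc, hsd y, neg_mul, mul_assoc]
        rw [e1, neg_add_cancel, zero_add] at h
        have e : s * (y * x) + μ * (s * (x * y)) = s * (y * x + μ * (x * y)) := by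
          try simp only [mul_add, add_mul, mul_assoc]
          try simp only [ps1, ps2]
          try simp only [pm1, pm2]
          all_goals first | abel | noncomm_ring
        exact cen_cancel_cen hprime hsc hsne (cen_of_eq e h)
      refine FIN hprime h2tor (fun _ => (0 : R)) (fun _ => (0 : R))
        (by simp) (by simp) (by simp) (by simp) μ hμ (fun x y => ?_)
      exact cen_of_eq (by noncomm_ring) (hH y x)
    · -- some w y₁ gives a nonzero central element killing all commutators
      push_neg at hw
      obtain ⟨y₁, hy₁⟩ := hw
      have hcc : Cen (d₂ s * (s * d₁ y₁ + d₁ s * y₁)) := by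
        have := hI 1 y₁
        rwa [mul_one] at this
      have hct : ∀ t : R, Cen (d₂ s * (s * d₁ y₁ + d₁ s * y₁) * t) := fun t =>
        cen_of_eq (mul_assoc _ _ _).symm (hI t y₁)
      intro u v
      have h0 : d₂ s * (s * d₁ y₁ + d₁ s * y₁) * (u * v - v * u) = 0 := by
        have h1 : (d₂ s * (s * d₁ y₁ + d₁ s * y₁) * u) * v
            = v * (d₂ s * (s * d₁ y₁ + d₁ s * y₁) * u) := hct u v
        have g1 : v * (d₂ s * (s * d₁ y₁ + d₁ s * y₁))
            - d₂ s * (s * d₁ y₁ + d₁ s * y₁) * v = 0 :=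
          sub_eq_zero.mpr (hcc v).symm
        have key : d₂ s * (s * d₁ y₁ + d₁ s * y₁) * (u * v - v * u)
            = ((d₂ s * (s * d₁ y₁ + d₁ s * y₁) * u) * v
                - v * (d₂ s * (s * d₁ y₁ + d₁ s * y₁) * u))
              + (v * (d₂ s * (s * d₁ y₁ + d₁ s * y₁))
                - d₂ s * (s * d₁ y₁ + d₁ s * y₁) * v) * u := by
          noncomm_ring
        rw [sub_eq_zero.mpr h1, g1, zero_mul, add_zero] at key
        exact key
      exact sub_eq_zero.mp (pr_cancel hprime hcc hy₁ h0)

end St14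

namespace St14
variable {R : Type*} [Ring R]

lemma wrap [StarRing R]
    (hprime : ∀ a b : R, (∀ r : R, a * r * b = 0) → a = 0 ∨ b = 0)
    (h2tor : ∀ a : R, 2 * a = 0 → a = 0)
    (hsecond : ∃ s : R, (∀ r : R, s * r = r * s) ∧ star s = -s ∧ s ≠ 0)
    (d₁ d₂ : R → R)
    (hd₁_add : ∀ x y : R, d₁ (x + y) = d₁ x + d₁ y)
    (hd₁_mul : ∀ x y : R, d₁ (x * y) = d₁ x * y + x * d₁ y)
    (hd₂_add : ∀ x y : R, d₂ (x + y) = d₂ x + d₂ y)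
    (hd₂_mul : ∀ x y : R, d₂ (x * y) = d₂ x * y + x * d₂ y)
    (μ : R) (hμ : μ = 1 ∨ μ = -1)
    (hmain : ∀ x : R, Cen (d₁ x * d₂ (star x) + (x * star x + μ * (star x * x)))) :
    (0 : R) ≠ 1 ∧ (∀ a b : R, a * b = b * a) ∧ (∀ a b : R, a * b = 0 → a = 0 ∨ b = 0) := by
  obtain ⟨s, hs, hss, hsne⟩ := hsecond
  have hcomm := MSL hprime h2tor s hs hss hsne d₁ d₂ hd₁_add hd₁_mul hd₂_add hd₂_mul μ hμ hmain
  refine ⟨?_, hcomm, ?_⟩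
  · intro h01
    exact hsne (by rw [← mul_one s, ← h01, mul_zero])
  · intro a b hab
    apply hprime
    intro r
    rw [hcomm a r, mul_assoc, hab, mul_zero]

end St14


open St14 in
/-- Corollary 10.
Let `R` be a 2-torsion free prime ring with involution `*` of the second kind, and let
`d₁, d₂` be derivations of `R`.  Then the following are equivalent:
(1) `d₁(x)d₂(x*) ∓ [x, x*] ∈ Z(R)` for all `x ∈ R`;
(2) `d₁(x)d₂(x*) ∓ x ∘ x* ∈ Z(R)` for all `x ∈ R`;
(3) `R` is an integral domain.
(Formalized, for each choice of sign, as (1) ↔ (3) and (2) ↔ (3).) -/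
theorem statement14 {R : Type*} [Ring R] [StarRing R]
    (hprime : ∀ a b : R, (∀ r : R, a * r * b = 0) → a = 0 ∨ b = 0)
    (h2tor : ∀ a : R, 2 * a = 0 → a = 0)
    (hsecond : ∃ s : R, (∀ r : R, s * r = r * s) ∧ star s = -s ∧ s ≠ 0)
    (d₁ d₂ : R → R)
    (hd₁_add : ∀ x y : R, d₁ (x + y) = d₁ x + d₁ y)
    (hd₁_mul : ∀ x y : R, d₁ (x * y) = d₁ x * y + x * d₁ y)
    (hd₂_add : ∀ x y : R, d₂ (x + y) = d₂ x + d₂ y)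
    (hd₂_mul : ∀ x y : R, d₂ (x * y) = d₂ x * y + x * d₂ y) :
    -- the `−` versions
    (((∀ x r : R,
        (d₁ x * d₂ (star x) - (x * star x - star x * x)) * r
          = r * (d₁ x * d₂ (star x) - (x * star x - star x * x)))
      ↔ ((0 : R) ≠ 1 ∧ (∀ a b : R, a * b = b * a) ∧
          (∀ a b : R, a * b = 0 → a = 0 ∨ b = 0)))
    ∧
    ((∀ x r : R,
        (d₁ x * d₂ (star x) - (x * star x + star x * x)) * r
          = r * (d₁ x * d₂ (star x) - (x * star x + star x * x)))
      ↔ ((0 : R) ≠ 1 ∧ (∀ a b : R, a * b = b * a) ∧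
          (∀ a b : R, a * b = 0 → a = 0 ∨ b = 0))))
    ∧
    -- the `+` versions
    (((∀ x r : R,
        (d₁ x * d₂ (star x) + (x * star x - star x * x)) * r
          = r * (d₁ x * d₂ (star x) + (x * star x - star x * x)))
      ↔ ((0 : R) ≠ 1 ∧ (∀ a b : R, a * b = b * a) ∧
          (∀ a b : R, a * b = 0 → a = 0 ∨ b = 0)))
    ∧
    ((∀ x r : R,
        (d₁ x * d₂ (star x) + (x * star x + star x * x)) * r
          = r * (d₁ x * d₂ (star x) + (x * star x + star x * x)))
      ↔ ((0 : R) ≠ 1 ∧ (∀ a b : R, a * b = b * a) ∧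
          (∀ a b : R, a * b = 0 → a = 0 ∨ b = 0)))) := by

  have bwd : ((0 : R) ≠ 1 ∧ (∀ a b : R, a * b = b * a) ∧
      (∀ a b : R, a * b = 0 → a = 0 ∨ b = 0)) →
      ∀ e r : R, e * r = r * e := fun h e r => h.2.1 e r
  have hne1a : ∀ x y : R, (fun t : R => -(d₁ t)) (x + y)
      = (fun t : R => -(d₁ t)) x + (fun t : R => -(d₁ t)) y := fun x y => by
    simp only [hd₁_add, neg_add]
  have hne1m : ∀ x y : R, (fun t : R => -(d₁ t)) (x * y)
      = (fun t : R => -(d₁ t)) x * y + x * (fun t : R => -(d₁ t)) y := fun x y => by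
    simp only [hd₁_mul]; noncomm_ring
  refine ⟨⟨⟨?_, fun h x r => bwd h _ r⟩, ⟨?_, fun h x r => bwd h _ r⟩⟩,
      ⟨⟨?_, fun h x r => bwd h _ r⟩, ⟨?_, fun h x r => bwd h _ r⟩⟩⟩
  · intro h
    refine wrap hprime h2tor hsecond (fun t => -(d₁ t)) d₂ hne1a hne1m hd₂_add hd₂_mul
      (-1) (Or.inr rfl) (fun x => cen_of_eq ?_ (cen_neg (h x)))
    noncomm_ring
  · intro h
    refine wrap hprime h2tor hsecond (fun t => -(d₁ t)) d₂ hne1a hne1m hd₂_add hd₂_mul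
      (1) (Or.inl rfl) (fun x => cen_of_eq ?_ (cen_neg (h x)))
    noncomm_ring
  · intro h
    refine wrap hprime h2tor hsecond d₁ d₂ hd₁_add hd₁_mul hd₂_add hd₂_mul
      (-1) (Or.inr rfl) (fun x => cen_of_eq ?_ (h x))
    noncomm_ring
  · intro h
    refine wrap hprime h2tor hsecond d₁ d₂ hd₁_add hd₁_mul hd₂_add hd₂_mul
      (1) (Or.inl rfl) (fun x => cen_of_eq ?_ (h x))
    noncomm_ring
end

section
/- Let R be an associative ring with involution *, let P be a prime ideal of R such that R/P has characteristic different from 2, and suppose * is of P-second kind (Z(R) ∩ S(R) is not contained in P). If d is a derivation of R, then the following are equivalent: (1) the image of d([x, x*]) − xx* lies in Z(R/P) for all x ∈ R; (2) the image of d(x ∘ x*) − xx* lies in Z(R/P) for all x ∈ R; (3) R/P is an integral domain. -/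
namespace St16Aux

variable {R : Type*} [Ring R] (P : TwoSidedIdeal R)

/-- `a` is central modulo `P`. -/
def Cen (a : R) : Prop := ∀ r : R, a * r - r * a ∈ P

theorem cen_congr {a b : R} (h : Cen P a) (e : a = b) : Cen P b := e ▸ h

theorem cen_add {a b : R} (ha : Cen P a) (hb : Cen P b) : Cen P (a + b) := fun r => by
  have h := P.add_mem (ha r) (hb r)
  have e : (a*r - r*a) + (b*r - r*b) = (a+b)*r - r*(a+b) := by noncomm_ring
  rwa [e] at h

theorem cen_sub {a b : R} (ha : Cen P a) (hb : Cen P b) : Cen P (a - b) := fun r => by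
  have h := P.sub_mem (ha r) (hb r)
  have e : (a*r - r*a) - (b*r - r*b) = (a-b)*r - r*(a-b) := by noncomm_ring
  rwa [e] at h

theorem cen_neg {a : R} (ha : Cen P a) : Cen P (-a) := fun r => by
  have h := P.neg_mem (ha r)
  have e : -(a*r - r*a) = (-a)*r - r*(-a) := by noncomm_ring
  rwa [e] at h

theorem cen_of_mem {a : R} (ha : a ∈ P) : Cen P a := fun r =>
  P.sub_mem (P.mul_mem_right _ _ ha) (P.mul_mem_left _ _ ha)

theorem cen_cmul {z a : R} (hz : ∀ r : R, z*r = r*z) (ha : Cen P a) : Cen P (z*a) := fun r => by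
  have h := P.mul_mem_left z _ (ha r)
  have e : z*(a*r - r*a) = (z*a)*r - r*(z*a) + (r*z - z*r)*a := by noncomm_ring
  rw [e, ← hz r, sub_self, zero_mul, add_zero] at h
  exact h

theorem cancel (hP : ∀ a b : R, (∀ r : R, a*r*b ∈ P) → a ∈ P ∨ b ∈ P)
    {z a : R} (hz : ∀ r : R, z*r = r*z) (hzP : z ∉ P) (h : z*a ∈ P) : a ∈ P := by
  rcases hP z a (fun r => by rw [hz r, mul_assoc]; exact P.mul_mem_left _ _ h) with h'|h'
  · exact absurd h' hzP
  · exact h'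

theorem cen_cancel (hP : ∀ a b : R, (∀ r : R, a*r*b ∈ P) → a ∈ P ∨ b ∈ P)
    {z a : R} (hz : ∀ r : R, z*r = r*z) (hzP : z ∉ P) (h : Cen P (z*a)) : Cen P a := fun r => by
  apply cancel P hP hz hzP
  have e : z*(a*r - r*a) = (z*a)*r - r*(z*a) + (r*z - z*r)*a := by noncomm_ring
  rw [e, ← hz r, sub_self, zero_mul, add_zero]
  exact h r

theorem central_mul {z w : R} (hz : ∀ r : R, z*r = r*z) (hw : ∀ r : R, w*r = r*w) :
    ∀ r : R, (z*w)*r = r*(z*w) := fun r => by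
  rw [mul_assoc, hw r, ← mul_assoc, hz r, mul_assoc]

theorem two_central : ∀ r : R, (2:R)*r = r*2 := fun r => by rw [two_mul, mul_two]

theorem mul_notmem (hP : ∀ a b : R, (∀ r : R, a*r*b ∈ P) → a ∈ P ∨ b ∈ P)
    {z w : R} (hz : ∀ r : R, z*r = r*z) (hzP : z ∉ P) (hwP : w ∉ P) : z*w ∉ P :=
  fun h => hwP (cancel P hP hz hzP h)

theorem comm_of_comm_cen (hP : ∀ a b : R, (∀ r : R, a*r*b ∈ P) → a ∈ P ∨ b ∈ P)
    (hδ : ∀ a b : R, Cen P (a*b - b*a)) : ∀ x y : R, x*y - y*x ∈ P := by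
  intro x y
  have hxc : Cen P (x*(x*y - y*x)) :=
    cen_congr P (hδ x (x*y)) (by noncomm_ring)
  have h1 : ∀ z : R, (x*z - z*x) * (x*y - y*x) ∈ P := by
    intro z
    have ha := hxc z
    have hb := P.mul_mem_left x _ (hδ x y z)
    have h := P.sub_mem ha hb
    have e : ((x*(x*y - y*x))*z - z*(x*(x*y - y*x))) - x*((x*y-y*x)*z - z*(x*y-y*x))
        = (x*z - z*x)*(x*y - y*x) := by noncomm_ring
    rwa [e] at h
  have hc2 : (x*y - y*x)*(x*y - y*x) ∈ P := h1 y
  have hall : ∀ r : R, (x*y - y*x)*r*(x*y - y*x) ∈ P := by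
    intro r
    have e : (x*y - y*x)*r*(x*y-y*x)
        = ((x*y-y*x)*r - r*(x*y-y*x))*(x*y-y*x) + r*((x*y-y*x)*(x*y-y*x)) := by noncomm_ring
    rw [e]
    exact P.add_mem (P.mul_mem_right _ _ (hδ x y r)) (P.mul_mem_left _ _ hc2)
  rcases hP _ _ hall with h|h <;> exact h

variable {d : R → R}

theorem d_zero (hd_add : ∀ x y : R, d (x+y) = d x + d y) : d 0 = 0 := by
  have h := hd_add 0 0
  rw [add_zero] at h
  exact (left_eq_add.mp h)

theorem d_neg (hd_add : ∀ x y : R, d (x+y) = d x + d y) : ∀ a : R, d (-a) = -(d a) := fun a => by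
  have h := hd_add a (-a)
  rw [add_neg_cancel, d_zero hd_add] at h
  exact (eq_neg_of_add_eq_zero_right h.symm)

theorem d_central (hd_mul : ∀ x y : R, d (x*y) = d x * y + x * d y)
    {z : R} (hz : ∀ r : R, z*r = r*z) : ∀ r : R, d z * r = r * d z := by
  intro r
  have h1 := hd_mul z r
  have h2 := hd_mul r z
  rw [hz r, h2, hz (d r)] at h1
  -- h1 : d r * z + r * d z = d z * r + d r * z
  rw [add_comm (d r * z) (r * d z)] at h1
  exact (add_right_cancel h1).symm

end St16Aux

open St16Aux in
theorem st16_key1 {R : Type*} [Ring R] [StarRing R] (P : TwoSidedIdeal R)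
    (hP_prime : ∀ a b : R, (∀ r : R, a * r * b ∈ P) → a ∈ P ∨ b ∈ P)
    (hchar : (2 : R) ∉ P)
    {s : R} (hs : ∀ r : R, s * r = r * s) (hss : star s = -s) (hsP : s ∉ P)
    {d : R → R}
    (hd_add : ∀ x y : R, d (x + y) = d x + d y)
    (hd_mul : ∀ x y : R, d (x * y) = d x * y + x * d y)
    (h : ∀ x r : R,
        (d (x * star x - star x * x) - x * star x) * r
          - r * (d (x * star x - star x * x) - x * star x) ∈ P) :
    ∀ x y : R, x * y - y * x ∈ P := by
  have hF : ∀ x : R, Cen P (d (x * star x - star x * x) - x * star x) := fun x r => h x r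
  have e2 : s * star s - star s * s = (0:R) := by rw [hss]; noncomm_ring
  have d0 : d 0 = 0 := d_zero hd_add
  -- Step 1 : x - star x is central mod P
  have step1 : ∀ x : R, Cen P (x - star x) := by
    intro x
    apply cen_cancel P hP_prime hs hsP
    have hc := cen_sub P (cen_sub P (hF (x+s)) (hF x)) (hF s)
    apply cen_congr P hc
    have e1 : (x+s) * star (x+s) - star (x+s) * (x+s) = x * star x - star x * x := by
      simp only [star_add, hss, mul_add, add_mul, mul_sub, sub_mul, mul_neg, neg_mul, hs,
        mul_assoc]
      abel
    rw [e1, e2, d0]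
    simp only [star_add, hss, mul_add, add_mul, mul_sub, sub_mul, mul_neg, neg_mul, hs, mul_assoc]
    abel
  -- Step 2 : x + star x is central mod P
  have step2 : ∀ x : R, Cen P (x + star x) := by
    intro x
    apply cen_cancel P hP_prime hs hsP
    apply cen_cancel P hP_prime hs hsP
    have hc := cen_sub P (cen_sub P (hF (s*x+s)) (hF (s*x))) (hF s)
    apply cen_congr P hc
    have e3 : (s*x+s) * star (s*x+s) - star (s*x+s) * (s*x+s)
        = (s*x) * star (s*x) - star (s*x) * (s*x) := by
      simp only [star_add, star_mul, hss, mul_add, add_mul, mul_sub, sub_mul, mul_neg, neg_mul,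
        hs, mul_assoc]
      abel
    rw [e3, e2, d0]
    simp only [star_add, star_mul, hss, mul_add, add_mul, mul_sub, sub_mul, mul_neg, neg_mul,
      hs, mul_assoc]
    abel
  -- conclude : every element is central mod P
  have hcen : ∀ x : R, Cen P x := by
    intro x
    apply cen_cancel P hP_prime (two_central (R := R)) hchar
    apply cen_congr P (cen_add P (step1 x) (step2 x))
    noncomm_ring
  exact fun x y => hcen x y

set_option maxRecDepth 100000 in
open St16Aux in
theorem st16_key2 {R : Type*} [Ring R] [StarRing R] (P : TwoSidedIdeal R)
    (hP_prime : ∀ a b : R, (∀ r : R, a * r * b ∈ P) → a ∈ P ∨ b ∈ P)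
    (hchar : (2 : R) ∉ P)
    {s : R} (hs : ∀ r : R, s * r = r * s) (hss : star s = -s) (hsP : s ∉ P)
    {d : R → R}
    (hd_add : ∀ x y : R, d (x + y) = d x + d y)
    (hd_mul : ∀ x y : R, d (x * y) = d x * y + x * d y)
    (h : ∀ x r : R,
        (d (x * star x + star x * x) - x * star x) * r
          - r * (d (x * star x + star x * x) - x * star x) ∈ P) :
    ∀ x y : R, x * y - y * x ∈ P := by
  have hF : ∀ x : R, Cen P (d (x * star x + star x * x) - x * star x) := fun x r => h x r
  have dneg := d_neg hd_add
  have dsub : ∀ a b : R, d (a - b) = d a - d b := fun a b => by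
    rw [sub_eq_add_neg, hd_add, dneg, sub_eq_add_neg]
  have hs2 : ∀ r : R, (s*s)*r = r*(s*s) := central_mul hs hs
  have ccen : ∀ r : R, d (s*s) * r = r * d (s*s) := d_central hd_mul hs2
  have dscen : ∀ r : R, d s * r = r * d s := d_central hd_mul hs
  -- Step 0a : d(s²)·(x x* + x* x) is central mod P
  have step0a : ∀ x : R, Cen P (d (s*s) * (x*star x + star x*x)) := by
    intro x
    have hc := cen_add P (cen_cmul P hs2 (hF x)) (hF (s*x))
    have h2 : Cen P (-(d (s*s) * (x*star x + star x*x))) := by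
      apply cen_congr P hc
      try simp only [star_add, star_mul, hss, mul_neg, neg_mul, neg_neg]
      try simp only [hd_add, hd_mul, dsub, dneg]
      try simp only [two_mul, mul_add, add_mul, mul_sub, sub_mul, mul_neg, neg_mul, neg_neg, mul_assoc]
      try simp only [hs]
      try simp only [mul_assoc]
      try simp only [hs]
      try simp only [mul_assoc]
      try simp only [hs]
      try simp only [mul_assoc]
      try simp only [hs]
      try simp only [mul_assoc]
      try simp only [dscen]
      try simp only [mul_assoc]
      try simp only [dscen]
      try simp only [mul_assoc]
      abel
    exact cen_congr P (cen_neg P h2) (neg_neg _)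
  -- Step 0b : linearized version
  have step0b : ∀ x y : R, Cen P (d (s*s) * (x*star y + y*star x + star x*y + star y*x)) := by
    intro x y
    have hc := cen_sub P (cen_sub P (step0a (x+y)) (step0a x)) (step0a y)
    apply cen_congr P hc
    try simp only [star_add, star_mul, hss, mul_neg, neg_mul, neg_neg]
    try simp only [hd_add, hd_mul, dsub, dneg]
    try simp only [two_mul, mul_add, add_mul, mul_sub, sub_mul, mul_neg, neg_mul, neg_neg, mul_assoc]
    try simp only [hs]
    try simp only [mul_assoc]
    try simp only [hs]
    try simp only [mul_assoc]
    try simp only [hs]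
    try simp only [mul_assoc]
    try simp only [hs]
    try simp only [mul_assoc]
    try simp only [dscen]
    try simp only [mul_assoc]
    try simp only [dscen]
    try simp only [mul_assoc]
    abel
  by_cases hdss : d (s*s) ∈ P
  · -- Case B : d(s²) ∈ P, hence d(s) ∈ P
    have not2s : (2:R)*s ∉ P := mul_notmem P hP_prime (two_central (R:=R)) hchar hsP
    have central2s : ∀ r : R, ((2:R)*s)*r = r*((2:R)*s) :=
      central_mul (two_central (R:=R)) hs
    have dsP : d s ∈ P := by
      apply cancel P hP_prime central2s not2s
      have e6 : ((2:R)*s)*(d s) = d (s*s) := by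
        simp only [hd_mul, two_mul, add_mul, hs, mul_assoc]
      rw [e6]; exact hdss
    have hβ : ∀ x y : R,
        Cen P (d (x*star y + y*star x + star x*y + star y*x) - x*star y - y*star x) := by
      intro x y
      apply cen_congr P (cen_sub P (cen_sub P (hF (x+y)) (hF x)) (hF y))
      simp only [hd_add, hd_mul, star_add, mul_add, add_mul]
      abel
    have hα : ∀ x y : R,
        Cen P (d (-(x*star y) + y*star x + star x*y - star y*x) + x*star y - y*star x) := by
      intro x y
      have hT := cen_sub P (cen_sub P (hF (x+s*y)) (hF x)) (hF (s*y))
      have hT' : Cen P (d s * (-(x*star y) + y*star x + star x*y - star y*x)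
          + s*(d (-(x*star y) + y*star x + star x*y - star y*x) + x*star y - y*star x)) := by
        apply cen_congr P hT
        try simp only [star_add, star_mul, hss, mul_neg, neg_mul, neg_neg]
        try simp only [hd_add, hd_mul, dsub, dneg]
        try simp only [two_mul, mul_add, add_mul, mul_sub, sub_mul, mul_neg, neg_mul, neg_neg, mul_assoc]
        try simp only [hs]
        try simp only [mul_assoc]
        try simp only [hs]
        try simp only [mul_assoc]
        try simp only [hs]
        try simp only [mul_assoc]
        try simp only [hs]
        try simp only [mul_assoc]
        try simp only [dscen]
        try simp only [mul_assoc]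
        try simp only [dscen]
        try simp only [mul_assoc]
        abel
      have hm : d s * (-(x*star y) + y*star x + star x*y - star y*x) ∈ P :=
        P.mul_mem_right _ _ dsP
      have hT'' := cen_sub P hT' (cen_of_mem P hm)
      have hT3 : Cen P (s*(d (-(x*star y) + y*star x + star x*y - star y*x)
          + x*star y - y*star x)) := cen_congr P hT'' (by abel)
      exact cen_cancel P hP_prime hs hsP hT3
    have hδ : ∀ a b : R, Cen P (a*b - b*a) := by
      intro a b
      have hγ : ∀ y w : R, Cen P (d (y*w + w*y) - y*w) := by
        intro y w
        have h1 := hα (star w) y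
        have h2 := hβ (star w) y
        simp only [star_star] at h1 h2
        have hsum := cen_add P h1 h2
        have h3 : Cen P ((2:R)*(d (y*w + w*y) - y*w)) := by
          apply cen_congr P hsum
          have e9 : d (-(star w*star y) + y*w + w*y - star y*star w)
              + d (star w*star y + y*w + w*y + star y*star w) = (2:R) * d (y*w + w*y) := by
            rw [← hd_add]
            have e9a : (-(star w*star y) + y*w + w*y - star y*star w)
                + (star w*star y + y*w + w*y + star y*star w) = (y*w + w*y) + (y*w + w*y) := by
              abel
            rw [e9a, hd_add, two_mul]
          rw [mul_sub, ← e9, two_mul]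
          abel
        exact cen_cancel P hP_prime (two_central (R:=R)) hchar h3
      have h1 := hγ a b
      have h2 := hγ b a
      have h3 := cen_sub P h2 h1
      apply cen_congr P h3
      rw [show b*a + a*b = a*b + b*a from add_comm _ _]
      abel
    exact comm_of_comm_cen P hP_prime hδ
  · -- Case A : d(s²) ∉ P
    have cs_central : ∀ r : R, (d (s*s) * s) * r = r * (d (s*s) * s) := central_mul ccen hs
    have csP : d (s*s) * s ∉ P := mul_notmem P hP_prime ccen hdss hsP
    have hA1 : ∀ x : R, Cen P (star x - x) := by
      intro x
      apply cen_cancel P hP_prime (central_mul (two_central (R:=R)) cs_central)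
        (mul_notmem P hP_prime (two_central (R:=R)) hchar csP)
      apply cen_congr P (step0b x s)
      try simp only [star_add, star_mul, hss, mul_neg, neg_mul, neg_neg]
      try simp only [hd_add, hd_mul, dsub, dneg]
      try simp only [two_mul, mul_add, add_mul, mul_sub, sub_mul, mul_neg, neg_mul, neg_neg, mul_assoc]
      try simp only [hs]
      try simp only [mul_assoc]
      try simp only [hs]
      try simp only [mul_assoc]
      try simp only [hs]
      try simp only [mul_assoc]
      try simp only [hs]
      try simp only [mul_assoc]
      try simp only [dscen]
      try simp only [mul_assoc]
      try simp only [dscen]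
      try simp only [mul_assoc]
      abel
    have hA2 : ∀ x : R, Cen P (x + star x) := by
      intro x
      have hz : ∀ r : R, ((((2:R)*(d (s*s)*s))*s))*r = r*((((2:R)*(d (s*s)*s))*s)) :=
        central_mul (central_mul (two_central (R:=R)) cs_central) hs
      have hzP : (((2:R)*(d (s*s)*s))*s) ∉ P :=
        mul_notmem P hP_prime (central_mul (two_central (R:=R)) cs_central)
          (mul_notmem P hP_prime (two_central (R:=R)) hchar csP) hsP
      have h0 : Cen P (((((2:R)*(d (s*s)*s))*s)) * (-(x + star x))) := by
        apply cen_congr P (step0b (s*x) s)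
        try simp only [star_add, star_mul, hss, mul_neg, neg_mul, neg_neg]
        try simp only [hd_add, hd_mul, dsub, dneg]
        try simp only [two_mul, mul_add, add_mul, mul_sub, sub_mul, mul_neg, neg_mul, neg_neg, mul_assoc]
        try simp only [hs]
        try simp only [mul_assoc]
        try simp only [hs]
        try simp only [mul_assoc]
        try simp only [hs]
        try simp only [mul_assoc]
        try simp only [hs]
        try simp only [mul_assoc]
        try simp only [dscen]
        try simp only [mul_assoc]
        try simp only [dscen]
        try simp only [mul_assoc]
        abel
      have h1 := cen_cancel P hP_prime hz hzP h0
      exact cen_congr P (cen_neg P h1) (by rw [neg_neg])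
    have hcen : ∀ x : R, Cen P x := by
      intro x
      have h2 : Cen P ((2:R)*star (star x)) :=
        cen_congr P (cen_add P (hA1 (star x)) (hA2 (star x))) (by noncomm_ring)
      have h3 := cen_cancel P hP_prime (two_central (R:=R)) hchar h2
      exact cen_congr P h3 (star_star x)
    exact fun x y => hcen x y




/-- Corollary 11.
Let `R` be a ring with involution `*`, `P` a prime ideal of `R` with `char (R/P) ≠ 2`
(equivalently, since `P` is proper, `(2 : R) ∉ P`), and suppose `*` is of `P`-second kind
(`Z(R) ∩ S(R) ⊄ P`).  If `d` is a derivation of `R`, the following are equivalent: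
(1) the image of `d([x, x*]) − xx*` lies in `Z(R/P)` for all `x ∈ R`;
(2) the image of `d(x ∘ x*) − xx*` lies in `Z(R/P)` for all `x ∈ R`;
(3) `R/P` is an integral domain.
(Formalized as (1) ↔ (3) and (2) ↔ (3).) -/
theorem statement16 {R : Type*} [Ring R] [StarRing R] (P : TwoSidedIdeal R)
    (hP_proper : (1 : R) ∉ P)
    (hP_prime : ∀ a b : R, (∀ r : R, a * r * b ∈ P) → a ∈ P ∨ b ∈ P)
    (hchar : (2 : R) ∉ P)
    (hsecond : ∃ s : R, (∀ r : R, s * r = r * s) ∧ star s = -s ∧ s ∉ P)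
    (d : R → R)
    (hd_add : ∀ x y : R, d (x + y) = d x + d y)
    (hd_mul : ∀ x y : R, d (x * y) = d x * y + x * d y) :
    ((∀ x r : R,
        (d (x * star x - star x * x) - x * star x) * r
          - r * (d (x * star x - star x * x) - x * star x) ∈ P)
      ↔ ((1 : R) ∉ P ∧ (∀ x y : R, x * y - y * x ∈ P) ∧
          (∀ x y : R, x * y ∈ P → x ∈ P ∨ y ∈ P)))
    ∧
    ((∀ x r : R,
        (d (x * star x + star x * x) - x * star x) * r
          - r * (d (x * star x + star x * x) - x * star x) ∈ P)
      ↔ ((1 : R) ∉ P ∧ (∀ x y : R, x * y - y * x ∈ P) ∧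
          (∀ x y : R, x * y ∈ P → x ∈ P ∨ y ∈ P))) := by
  obtain ⟨s, hs, hss, hsP⟩ := hsecond
  -- commutativity mod P upgrades primeness to the "integral domain" form
  have primeQ : (∀ x y : R, x * y - y * x ∈ P) →
      ∀ x y : R, x * y ∈ P → x ∈ P ∨ y ∈ P := by
    intro hcomm x y hxy
    refine hP_prime x y fun r => ?_
    have h1 : x * (r * y - y * r) ∈ P := P.mul_mem_left _ _ (hcomm r y)
    have h2 : (x * y) * r ∈ P := P.mul_mem_right _ _ hxy
    have e : x * r * y = x * (r * y - y * r) + (x * y) * r := by noncomm_ring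
    rw [e]
    exact P.add_mem h1 h2
  constructor
  · constructor
    · intro h1
      have hcomm := st16_key1 P hP_prime hchar hs hss hsP hd_add hd_mul h1
      exact ⟨hP_proper, hcomm, primeQ hcomm⟩
    · rintro ⟨-, hcomm, -⟩
      intro x r
      exact hcomm _ r
  · constructor
    · intro h2
      have hcomm := st16_key2 P hP_prime hchar hs hss hsP hd_add hd_mul h2
      exact ⟨hP_proper, hcomm, primeQ hcomm⟩
    · rintro ⟨-, hcomm, -⟩
      intro x r
      exact hcomm _ r
end

section
/- Let R be a 2-torsion free prime ring with involution * of the second kind (Z(R) ∩ S(R) ≠ {0}), and let d₁ and d₂ be derivations of R. Then d₁(x*x) − d₂(xx*) − xx* ∈ Z(R) for all x ∈ R if and only if R is an integral domain. -/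
section Aux

variable {R : Type*} [Ring R]

private abbrev Cen (a : R) : Prop := ∀ r : R, a * r = r * a

private lemma cen_of_eq {a b : R} (h : a = b) (ha : Cen a) : Cen b := h ▸ ha

private lemma cen_add {a b : R} (ha : Cen a) (hb : Cen b) : Cen (a + b) := fun r => by
  rw [add_mul, mul_add, ha r, hb r]

private lemma cen_sub {a b : R} (ha : Cen a) (hb : Cen b) : Cen (a - b) := fun r => by
  rw [sub_mul, mul_sub, ha r, hb r]

private lemma cen_mul {a b : R} (ha : Cen a) (hb : Cen b) : Cen (a * b) := fun r => by
  rw [mul_assoc, hb r, ← mul_assoc, ha r, mul_assoc]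

private lemma cen_strip_left (hprime : ∀ a b : R, (∀ r : R, a * r * b = 0) → a = 0 ∨ b = 0) {e m : R} (he : Cen e) (hne : e ≠ 0) (h : e * m = 0) :
    m = 0 := by
  rcases hprime e m (fun r => by rw [he r, mul_assoc, h, mul_zero]) with h' | h'
  · exact absurd h' hne
  · exact h'

private lemma cen_strip_cen (hprime : ∀ a b : R, (∀ r : R, a * r * b = 0) → a = 0 ∨ b = 0) {e m : R} (he : Cen e) (hne : e ≠ 0) (h : Cen (e * m)) :
    Cen m := by
  intro r
  have h1 : e * (m * r - r * m) = 0 := by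
    rw [mul_sub, ← mul_assoc, h r, ← mul_assoc, ← he r, mul_assoc, sub_self]
  exact sub_eq_zero.mp (cen_strip_left hprime he hne h1)

private lemma two_strip (h2 : ∀ a : R, 2 * a = 0 → a = 0) {m : R}
    (h : Cen (2 * m)) : Cen m := by
  intro r
  have h1 : 2 * (m * r - r * m) = 0 := by
    have e : 2 * (m * r - r * m) = (2 * m) * r - r * (2 * m) := by noncomm_ring
    rw [e, h r, sub_self]
  exact sub_eq_zero.mp (h2 _ h1)

private lemma lcomm1 (hprime : ∀ a b : R, (∀ r : R, a * r * b = 0) → a = 0 ∨ b = 0) {e : R} (he : Cen e) (h1 : ∀ y : R, Cen (e * y)) (hne : e ≠ 0) :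
    ∀ a b : R, a * b = b * a := by
  intro a b
  have h : e * (a * b - b * a) = 0 := by
    rw [mul_sub, ← mul_assoc, h1 a b, ← mul_assoc, ← he b, mul_assoc, sub_self]
  exact sub_eq_zero.mp (cen_strip_left hprime he hne h)

private lemma lcomm3 (hprime : ∀ a b : R, (∀ r : R, a * r * b = 0) → a = 0 ∨ b = 0) {k : R} (h : ∀ x y : R, Cen (k * (x * y - y * x))) :
    (∀ a b : R, a * b = b * a) ∨ k = 0 := by
  have hzero : ∀ x y : R, k * (x * y - y * x) = 0 := by
    intro x y
    by_cases hz : k * (x * y - y * x) = 0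
    · exact hz
    · exfalso
      have hz1 : Cen (k * (x * y - y * x)) := h x y
      have hzx : Cen (k * (x * y - y * x) * x) :=
        cen_of_eq (show k * (x * (y * x) - (y * x) * x) = k * (x * y - y * x) * x by
          noncomm_ring) (h x (y * x))
      have hxr : ∀ r : R, k * (x * y - y * x) * (x * r - r * x) = 0 := by
        intro r
        rw [mul_sub, ← mul_assoc, hzx r, ← mul_assoc, ← hz1 r, mul_assoc, sub_self]
      have hxc : ∀ r : R, x * r = r * x := fun r =>
        sub_eq_zero.mp (cen_strip_left hprime hz1 hz (hxr r))
      exact hz (by rw [hxc y, sub_self, mul_zero])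
  by_cases hk : k = 0
  · exact Or.inr hk
  · left
    intro a b
    have key : ∀ r : R, k * r * (a * b - b * a) = 0 := by
      intro r
      have e : k * r * (a * b - b * a)
          = k * (a * (r * b) - (r * b) * a) - (k * (a * r - r * a)) * b := by noncomm_ring
      rw [e, hzero a (r * b), hzero a r, zero_mul, sub_zero]
    rcases hprime k (a * b - b * a) key with h' | h'
    · exact absurd h' hk
    · exact sub_eq_zero.mp h'

private lemma keylemma (hprime : ∀ a b : R, (∀ r : R, a * r * b = 0) → a = 0 ∨ b = 0) (A B : R)
    (h : ∀ x y : R, Cen (A * (x * y) - B * (y * x))) :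
    (∀ a b : R, a * b = b * a) ∨ (A = 0 ∧ B = 0) := by
  have h1 : ∀ y : R, Cen ((A - B) * y) := fun y =>
    cen_of_eq (show A * (1 * y) - B * (y * 1) = (A - B) * y by noncomm_ring) (h 1 y)
  have h0 : Cen (A - B) := cen_of_eq (mul_one _) (h1 1)
  by_cases hAB : A - B = 0
  · have hBA : A = B := sub_eq_zero.mp hAB
    subst hBA
    have h2 : ∀ x y : R, Cen (A * (x * y - y * x)) := fun x y =>
      cen_of_eq (show A * (x * y) - A * (y * x) = A * (x * y - y * x) by noncomm_ring)
        (h x y)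
    rcases lcomm3 hprime h2 with hc | hk
    · exact Or.inl hc
    · exact Or.inr ⟨hk, hk⟩
  · exact Or.inl (lcomm1 hprime h0 h1 hAB)

private lemma d_sub {d : R → R} (hd : ∀ x y : R, d (x + y) = d x + d y) (x y : R) :
    d (x - y) = d x - d y := by
  have h := hd (x - y) y
  rw [sub_add_cancel] at h
  exact eq_sub_of_add_eq h.symm

private lemma comm_helper {x y gx gy : R} (h1 : gx * y = y * gx) (h2 : gy * x = x * gy) :
    (gx * y + x * gy + x * y) - (gy * x + y * gx + y * x) = x * y - y * x := by
  rw [h1, h2]; noncomm_ring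

end Aux

private lemma forward_comm {R : Type*} [Ring R] [StarRing R]
    (hprime : ∀ a b : R, (∀ r : R, a * r * b = 0) → a = 0 ∨ b = 0)
    (h2tor : ∀ a : R, 2 * a = 0 → a = 0)
    (s : R) (hs : ∀ r : R, s * r = r * s) (hss : star s = -s) (hs0 : s ≠ 0)
    (d₁ d₂ : R → R)
    (hd₁_add : ∀ x y : R, d₁ (x + y) = d₁ x + d₁ y)
    (hd₁_mul : ∀ x y : R, d₁ (x * y) = d₁ x * y + x * d₁ y)
    (hd₂_add : ∀ x y : R, d₂ (x + y) = d₂ x + d₂ y)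
    (hd₂_mul : ∀ x y : R, d₂ (x * y) = d₂ x * y + x * d₂ y)
    (H : ∀ x : R, Cen (d₁ (star x * x) - d₂ (x * star x) - x * star x)) :
    ∀ a b : R, a * b = b * a := by
  have hs' : ∀ r : R, r * s = s * r := fun r => (hs r).symm
  have hswap : ∀ x y : R, x * (s * y) = s * (x * y) := fun x y => by
    rw [← mul_assoc, hs' x, mul_assoc]
  -- star computations
  have a1 : ∀ x y : R,
      star x * (y * s) + star (y * s) * x = s * (star x * y - star y * x) := by
    intro x y
    rw [star_mul, hss, hs' y, hswap (star x) y]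
    noncomm_ring
  have a2 : ∀ x y : R,
      x * star (y * s) + (y * s) * star x = s * (y * star x - x * star y) := by
    intro x y
    rw [star_mul, hss, hs' y, neg_mul, mul_neg, hswap x (star y)]
    noncomm_ring
  have b1 : ∀ x y : R,
      star x * (y * s) - star (y * s) * x = s * (star x * y + star y * x) := by
    intro x y
    rw [star_mul, hss, hs' y, hswap (star x) y]
    noncomm_ring
  have b2 : ∀ x y : R,
      (y * s) * star x - x * star (y * s) = s * (x * star y + y * star x) := by
    intro x y
    rw [star_mul, hss, hs' y, neg_mul, mul_neg, hswap x (star y)]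
    noncomm_ring
  have c1 : ∀ x y : R, star x * (y * s) = s * (star x * y) := by
    intro x y
    rw [hs' y, hswap (star x) y]
  have c2 : ∀ x y : R, (y * s) * star x = s * (y * star x) := by
    intro x y
    rw [hs' y, mul_assoc]
  -- linearization
  have hP : ∀ x y : R, Cen (d₁ (star x * y + star y * x)
      - d₂ (x * star y + y * star x) - (x * star y + y * star x)) := by
    intro x y
    have h := cen_sub (cen_sub (H (x + y)) (H x)) (H y)
    refine cen_of_eq ?_ h
    have e₁ : star (x + y) * (x + y)
        = star x * x + (star x * y + star y * x) + star y * y := by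
      rw [star_add]; noncomm_ring
    have e₂ : (x + y) * star (x + y)
        = x * star x + (x * star y + y * star x) + y * star y := by
      rw [star_add]; noncomm_ring
    rw [e₁, e₂, hd₁_add, hd₁_add, hd₂_add, hd₂_add]
    noncomm_ring
  -- the relation J
  have hJ : ∀ x y : R, Cen (d₁ s * (star x * y - star y * x)
      - d₂ s * (y * star x - x * star y)
      + 2 * (s * (d₁ (star x * y) - d₂ (y * star x) - y * star x))) := by
    intro x y
    have h := cen_add (hP x (y * s)) (cen_mul hs (hP x y))
    refine cen_of_eq ?_ h
    rw [a1, a2, hd₁_mul s, hd₂_mul s, d_sub hd₁_add, d_sub hd₂_add, hd₁_add, hd₂_add]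
    noncomm_ring
  -- the relation K
  have hK : ∀ x y : R, Cen (s * d₁ s * (star x * y + star y * x)
      - s * d₂ s * (x * star y + y * star x)) := by
    intro x y
    refine two_strip h2tor ?_
    have h := cen_sub (hJ x (y * s)) (cen_mul hs (hJ x y))
    refine cen_of_eq ?_ h
    rw [b1, b2, c1, c2, hd₁_mul s, hd₂_mul s, hswap (d₁ s), hswap (d₂ s)]
    noncomm_ring
  -- the relation R7
  have hR7 : ∀ x y : R, Cen (s * (s * d₁ s) * (star y * x)
      - s * (s * d₂ s) * (x * star y)) := by
    intro x y
    refine two_strip h2tor ?_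
    have h := cen_sub (cen_mul hs (hK x y)) (hK x (y * s))
    refine cen_of_eq ?_ h
    rw [a1, a2, hswap (s * d₁ s), hswap (s * d₂ s)]
    noncomm_ring
  have hR7' : ∀ x y : R, Cen ((-(s * (s * d₂ s))) * (x * y)
      - (-(s * (s * d₁ s))) * (y * x)) := by
    intro x y
    have h := hR7 x (star y)
    rw [star_star] at h
    exact cen_of_eq (by noncomm_ring) h
  rcases keylemma hprime _ _ hR7' with hc | ⟨hq0, hp0⟩
  · exact hc
  have hq : d₂ s = 0 :=
    cen_strip_left hprime hs hs0 (cen_strip_left hprime hs hs0 (neg_eq_zero.mp hq0))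
  have hp : d₁ s = 0 :=
    cen_strip_left hprime hs hs0 (cen_strip_left hprime hs hs0 (neg_eq_zero.mp hp0))
  -- the star-free relation
  have hfin : ∀ x y : R, Cen (d₁ (x * y) - d₂ (y * x) - y * x) := by
    intro x y
    have h := hJ (star x) y
    rw [hp, hq, star_star] at h
    have h2 : Cen (2 * (s * (d₁ (x * y) - d₂ (y * x) - y * x))) :=
      cen_of_eq (by noncomm_ring) h
    exact cen_strip_cen hprime hs hs0 (two_strip h2tor h2)
  have hγ : ∀ t : R, Cen (d₁ t - d₂ t - t) := by
    intro t
    have h := hfin 1 t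
    rwa [one_mul, mul_one] at h
  have hcom : ∀ x y : R, Cen (x * y - y * x) := by
    intro x y
    have h := cen_sub (hγ (x * y)) (hγ (y * x))
    refine cen_of_eq ?_ h
    calc (d₁ (x * y) - d₂ (x * y) - x * y) - (d₁ (y * x) - d₂ (y * x) - y * x)
        = ((d₁ x - d₂ x - x) * y + x * (d₁ y - d₂ y - y) + x * y)
          - ((d₁ y - d₂ y - y) * x + y * (d₁ x - d₂ x - x) + y * x) := by
          rw [hd₁_mul x y, hd₂_mul x y, hd₁_mul y x, hd₂_mul y x]
          noncomm_ring
      _ = x * y - y * x := comm_helper (hγ x y) (hγ y x)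
  rcases lcomm3 hprime (k := 1)
      (fun x y => cen_of_eq (one_mul (x * y - y * x)).symm (hcom x y)) with hc | h1
  · exact hc
  · exact absurd (by rw [← mul_one s, h1, mul_zero]) hs0

/-- Corollary 12.
Let `R` be a 2-torsion free prime ring with involution `*` of the second kind, and let
`d₁, d₂` be derivations of `R`.  Then `d₁(x*x) − d₂(xx*) − xx* ∈ Z(R)` for all `x ∈ R`
if and only if `R` is an integral domain. -/
theorem statement17 {R : Type*} [Ring R] [StarRing R]
    (hprime : ∀ a b : R, (∀ r : R, a * r * b = 0) → a = 0 ∨ b = 0)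
    (h2tor : ∀ a : R, 2 * a = 0 → a = 0)
    (hsecond : ∃ s : R, (∀ r : R, s * r = r * s) ∧ star s = -s ∧ s ≠ 0)
    (d₁ d₂ : R → R)
    (hd₁_add : ∀ x y : R, d₁ (x + y) = d₁ x + d₁ y)
    (hd₁_mul : ∀ x y : R, d₁ (x * y) = d₁ x * y + x * d₁ y)
    (hd₂_add : ∀ x y : R, d₂ (x + y) = d₂ x + d₂ y)
    (hd₂_mul : ∀ x y : R, d₂ (x * y) = d₂ x * y + x * d₂ y) :
    (∀ x r : R,
        (d₁ (star x * x) - d₂ (x * star x) - x * star x) * r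
          = r * (d₁ (star x * x) - d₂ (x * star x) - x * star x))
      ↔ ((0 : R) ≠ 1 ∧ (∀ a b : R, a * b = b * a) ∧
          (∀ a b : R, a * b = 0 → a = 0 ∨ b = 0)) := by
  obtain ⟨s, hs, hss, hs0⟩ := hsecond
  constructor
  · intro H
    have hcomm := forward_comm hprime h2tor s hs hss hs0 d₁ d₂
      hd₁_add hd₁_mul hd₂_add hd₂_mul (fun x => H x)
    refine ⟨?_, hcomm, ?_⟩
    · intro h01
      exact hs0 (by rw [← mul_one s, ← h01, mul_zero])
    · intro a b hab
      exact hprime a b (fun r => by rw [hcomm a r, mul_assoc, hab, mul_zero])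
  · rintro ⟨h01, hcomm, hdom⟩ x r
    exact hcomm _ _
end
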